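/- arXiv:1312.6386 — 7 statements merged into one kernel-verified Lean document; each statement's English description precedes it below -/
import Mathlib

section
/- For $\ell \ge 1$ and real $r \ge 1$, the $\ell$-dimensional Lebesgue volume $v_{\ell}(r)$ of the set $\{x \in \mathbb{R}^{\ell} : x_j \ge 1 \text{ for all } j, \prod_{j=1}^{\ell} x_j \le r\}$ satisfies $v_{\ell}(r) \le r \frac{(\ln r)^{\ell-1}}{(\ell-1)!}$. -/
/-!
Slicing along the first coordinate, `v_{n+1}(r) = ∫_1^r v_n(r/t) dt`, so by induction
`v_{n+1}(r) ≤ ∫_1^r (r/t) log(r/t)^(n-1)/(n-1)! dt = r log(r)^n/n!`, the last integral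
having the antiderivative `-r log(r/t)^n/n!`.
-/

open MeasureTheory

/-- `v ℓ r` : the `ℓ`-dimensional Lebesgue volume of the hyperbolic-cross set
`{x ∈ ℝ^ℓ : x_j ≥ 1 for all j, ∏ x_j ≤ r}`. -/
noncomputable def hypVol (ℓ : ℕ) (r : ℝ) : ℝ :=
  (volume {x : Fin ℓ → ℝ | (∀ j, 1 ≤ x j) ∧ ∏ j, x j ≤ r}).toReal

open Set Real
open scoped Nat

def hyperbolicCross (n : ℕ) (r : ℝ) : Set (Fin n → ℝ) :=
  {x | (∀ j, 1 ≤ x j) ∧ ∏ j, x j ≤ r}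

namespace hyperbolicCross

variable {n : ℕ} {r : ℝ}

lemma eq_empty_of_lt_one (hr : r < 1) : hyperbolicCross n r = ∅ :=
  eq_empty_of_forall_notMem fun _ ⟨hx, hxr⟩ =>
    (hxr.trans_lt hr).not_ge (Finset.one_le_prod fun j _ => hx j)

lemma volume_zero_le_one : volume (hyperbolicCross 0 r) ≤ 1 := by
  rw [Measure.volume_pi_eq_dirac]
  exact prob_le_one

lemma mem_succ_iff {x : Fin (n + 1) → ℝ} :
    x ∈ hyperbolicCross (n + 1) r ↔ 1 ≤ x 0 ∧ Fin.tail x ∈ hyperbolicCross n (r / x 0) := by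
  simp only [hyperbolicCross, mem_ofPred_eq, Fin.forall_fin_succ, Fin.prod_univ_succ]
  constructor
  · rintro ⟨⟨h0, h⟩, hr⟩
    exact ⟨h0, h, (le_div_iff₀' (by linarith)).2 hr⟩
  · rintro ⟨h0, h, hr⟩
    exact ⟨⟨h0, h⟩, (le_div_iff₀' (by linarith)).1 hr⟩

lemma volume_succ :
    volume (hyperbolicCross (n + 1) r) = ∫⁻ t in Icc 1 r, volume (hyperbolicCross n (r / t)) := by
  set S : Set (ℝ × (Fin n → ℝ)) := {p | 1 ≤ p.1 ∧ p.2 ∈ hyperbolicCross n (r / p.1)}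
  have hS : MeasurableSet S := by
    unfold S hyperbolicCross
    measurability
  have hpre : hyperbolicCross (n + 1) r = MeasurableEquiv.piFinSuccAbove (fun _ => ℝ) 0 ⁻¹' S := by
    ext x
    exact mem_succ_iff
  have hslice (t : ℝ) : volume (Prod.mk t ⁻¹' S) =
      (Icc 1 r).indicator (fun t => volume (hyperbolicCross n (r / t))) t := by
    by_cases ht : t ∈ Icc 1 r
    · simp [S, ht.1, indicator_of_mem ht]
    · by_cases ht1 : 1 ≤ t
      · have : r / t < 1 := (div_lt_one (by linarith)).2 (by simpa [ht1] using ht)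
        simp [S, ht1, indicator_of_notMem ht, eq_empty_of_lt_one this]
      · simp [S, ht1]
  rw [hpre, (volume_preserving_piFinSuccAbove (fun _ => ℝ) 0).measure_preimage_equiv,
    Measure.volume_eq_prod, Measure.prod_apply hS, ← lintegral_indicator measurableSet_Icc]
  exact lintegral_congr hslice

end hyperbolicCross

section

variable {r : ℝ}

lemma continuousOn_div_mul_log_div_pow (hr : r ≠ 0) (n : ℕ) :
    ContinuousOn (fun t => r / t * log (r / t) ^ n / n !) {0}ᶜ := by
  have ht : ∀ t ∈ ({0}ᶜ : Set ℝ), t ≠ 0 := fun _ => id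
  have hrt : ∀ t ∈ ({0}ᶜ : Set ℝ), r / t ≠ 0 := fun t h => div_ne_zero hr h
  fun_prop (disch := assumption)

lemma hasDerivAt_neg_mul_log_div_pow {t : ℝ} (hr : r ≠ 0) (ht : t ≠ 0) (n : ℕ) :
    HasDerivAt (fun t => -(r * log (r / t) ^ (n + 1) / (n + 1)!))
      (r / t * log (r / t) ^ n / n !) t := by
  have hlog : HasDerivAt (fun t => log (r / t)) (-t⁻¹) t := by
    have := ((hasDerivAt_inv ht).const_mul r).log (by simp [hr, ht])
    simp only [← div_eq_mul_inv] at this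
    convert this using 1
    field_simp
  refine (((hlog.pow (n + 1)).const_mul r).div_const ((n + 1)! : ℝ)).neg.congr_deriv ?_
  rw [Nat.factorial_succ]
  push_cast
  field_simp

lemma integral_div_mul_log_div_pow (hr : 0 < r) (n : ℕ) :
    ∫ t in (1 : ℝ)..r, r / t * log (r / t) ^ n / n ! = r * log r ^ (n + 1) / (n + 1)! := by
  have hpos : ∀ t ∈ uIcc 1 r, 0 < t := fun t ht =>
    lt_of_lt_of_le (lt_min one_pos hr) (by simpa [uIcc] using ht.1)
  rw [intervalIntegral.integral_eq_sub_of_hasDerivAt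
    (fun t ht => hasDerivAt_neg_mul_log_div_pow hr.ne' (hpos t ht).ne' n)
    ((continuousOn_div_mul_log_div_pow hr.ne' n).mono
      fun t ht => (hpos t ht).ne').intervalIntegrable]
  simp

lemma setLIntegral_Icc_ofReal_div_mul_log_div_pow (hr : 1 ≤ r) (n : ℕ) :
    ∫⁻ t in Icc 1 r, ENNReal.ofReal (r / t * log (r / t) ^ n / n !) =
      ENNReal.ofReal (r * log r ^ (n + 1) / (n + 1)!) := by
  have hpos : ∀ t ∈ Icc 1 r, 0 < t := fun t ht => one_pos.trans_le ht.1
  have hint : IntegrableOn (fun t => r / t * log (r / t) ^ n / n !) (Icc 1 r) :=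
    ((continuousOn_div_mul_log_div_pow (by positivity) n).mono
      fun t ht => (hpos t ht).ne').integrableOn_Icc
  have hnonneg : ∀ t ∈ Icc 1 r, 0 ≤ r / t * log (r / t) ^ n / n ! := fun t ht =>
    have : 1 ≤ r / t := (one_le_div (hpos t ht)).2 ht.2
    by positivity [log_nonneg this]
  rw [← ofReal_integral_eq_lintegral_ofReal hint
      (ae_restrict_of_forall_mem measurableSet_Icc hnonneg),
    integral_Icc_eq_integral_Ioc, ← intervalIntegral.integral_of_le hr,
    integral_div_mul_log_div_pow (by positivity) n]

end

lemma volume_hyperbolicCross_le (n : ℕ) {r : ℝ} (hr : 1 ≤ r) :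
    volume (hyperbolicCross (n + 1) r) ≤ ENNReal.ofReal (r * log r ^ n / n !) := by
  induction n generalizing r with
  | zero =>
    calc volume (hyperbolicCross 1 r)
        ≤ ∫⁻ _ in Icc 1 r, 1 := by
          rw [hyperbolicCross.volume_succ]
          exact lintegral_mono fun _ => hyperbolicCross.volume_zero_le_one
      _ ≤ ENNReal.ofReal (r * log r ^ 0 / 0 !) := by
          simpa using ENNReal.ofReal_le_ofReal (by linarith)
  | succ n ih =>
    rw [hyperbolicCross.volume_succ, ← setLIntegral_Icc_ofReal_div_mul_log_div_pow hr]
    exact setLIntegral_mono' measurableSet_Icc fun t ht =>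
      ih ((one_le_div (one_pos.trans_le ht.1)).2 ht.2)

theorem stmt1 (ℓ : ℕ) (hℓ : 1 ≤ ℓ) (r : ℝ) (hr : 1 ≤ r) :
    hypVol ℓ r ≤ r * (Real.log r) ^ (ℓ - 1) / (Nat.factorial (ℓ - 1)) := by
  obtain ⟨n, rfl⟩ := Nat.exists_eq_add_of_le' hℓ
  have hbound : 0 ≤ r * log r ^ n / n ! := by positivity [log_nonneg hr]
  rw [Nat.add_sub_cancel]
  exact ENNReal.toReal_le_of_le_ofReal hbound (volume_hyperbolicCross_le n hr)
end

section
/- For $\ell \ge 2$ and real $r \ge 1$, the volume $v_{\ell}(r)$ of the hyperbolic cross set $\{x \in \mathbb{R}^{\ell} : x_j \ge 1, \prod_{j=1}^{\ell} x_j \le r\}$ satisfies the lower bound $v_{\ell}(r) \ge r\left(\frac{(\ln r)^{\ell-1}}{(\ell-1)!} - \frac{(\ln r)^{\ell-2}}{(\ell-2)!}\right)$. -/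
/-!
Slicing off the first coordinate gives `v_{ℓ+1}(r) ≥ ∫_1^r v_ℓ(r/y) dy`, and the substitution
`u = log (r/y)` turns a lower bound `v_ℓ(s) ≥ s f(log s)` into `v_{ℓ+1}(r) ≥ r ∫_0^{log r} f`.
Starting from `v_1(s) = s - 1 = s (1 - e^{-log s})`, one step gives `v_2(r) ≥ r (log r - 1)`; since
`u^{k+1}/(k+1)! - u^k/k!` integrates over `[0, L]` to the same expression with `k + 1`, induction
gives the bound for every `ℓ ≥ 2`.
-/

open MeasureTheory Set

section ConsSlices

variable {β : Type*} [MeasureSpace β] {n : ℕ} {s : Set (Fin (n + 1) → β)}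

theorem preimage_prodMk_preimage_piFinSuccAbove_zero_symm (y : β) :
    Prod.mk y ⁻¹' ((MeasurableEquiv.piFinSuccAbove (fun _ : Fin (n + 1) => β) 0).symm ⁻¹' s) =
      {x | Fin.cons y x ∈ s} := by
  ext x
  simp [Fin.consEquiv]

variable [SigmaFinite (volume : Measure β)]

theorem MeasureTheory.volume_eq_lintegral_volume_cons (hs : MeasurableSet s) :
    volume s = ∫⁻ y, volume {x : Fin n → β | Fin.cons y x ∈ s} := by
  have hs' := (MeasurableEquiv.piFinSuccAbove (fun _ : Fin (n + 1) => β) 0).symm.measurable hs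
  rw [← ((volume_preserving_piFinSuccAbove (fun _ : Fin (n + 1) => β) 0).symm _
    ).measure_preimage_equiv, Measure.volume_eq_prod, Measure.prod_apply hs']
  simp only [preimage_prodMk_preimage_piFinSuccAbove_zero_symm]

theorem measurable_volume_setOf_cons_mem (hs : MeasurableSet s) :
    Measurable fun y => volume {x : Fin n → β | Fin.cons y x ∈ s} := by
  simpa only [preimage_prodMk_preimage_piFinSuccAbove_zero_symm] using
    measurable_measure_prodMk_left (ν := volume)
      ((MeasurableEquiv.piFinSuccAbove (fun _ : Fin (n + 1) => β) 0).symm.measurable hs)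

end ConsSlices

theorem intervalIntegral.integral_comp_log_div_div {f : ℝ → ℝ} (hf : Continuous f) {r : ℝ}
    (hr : 0 < r) :
    ∫ y in (1 : ℝ)..r, f (Real.log (r / y)) / y = ∫ u in (0 : ℝ)..Real.log r, f u := by
  have hpos : ∀ y ∈ uIcc (1 : ℝ) r, 0 < y := fun y hy =>
    lt_of_lt_of_le (lt_min one_pos hr) hy.1
  have hderiv : ∀ y ∈ uIcc (1 : ℝ) r,
      HasDerivAt (fun y => Real.log r - Real.log y) (-y⁻¹) y := fun y hy =>
    by simpa using (Real.hasDerivAt_log (hpos y hy).ne').const_sub (Real.log r)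
  have hcont : ContinuousOn (fun y : ℝ => -y⁻¹) (uIcc 1 r) :=
    (continuousOn_inv₀.mono fun y hy => (hpos y hy).ne').neg
  have hsubst := integral_comp_mul_deriv hderiv hcont hf
  simp only [Function.comp_def, Real.log_one, sub_zero, sub_self] at hsubst
  calc ∫ y in (1 : ℝ)..r, f (Real.log (r / y)) / y
      = -∫ y in (1 : ℝ)..r, f (Real.log r - Real.log y) * -y⁻¹ := by
        rw [← integral_neg]
        refine integral_congr fun y hy => ?_
        simp only [Real.log_div hr.ne' (hpos y hy).ne']
        ring
    _ = ∫ u in (0 : ℝ)..Real.log r, f u := by rw [hsubst, integral_symm, neg_neg]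

def hypCross (ℓ : ℕ) (r : ℝ) : Set (Fin ℓ → ℝ) := {x | (∀ j, 1 ≤ x j) ∧ ∏ j, x j ≤ r}

theorem hypVol_eq (ℓ : ℕ) (r : ℝ) : hypVol ℓ r = (volume (hypCross ℓ r)).toReal := rfl

theorem measurableSet_hypCross (ℓ : ℕ) (r : ℝ) : MeasurableSet (hypCross ℓ r) := by
  rw [hypCross, ofPred_and, ofPred_forall]
  exact (MeasurableSet.iInter fun j => measurableSet_le measurable_const (by fun_prop)).inter
    (measurableSet_le (by fun_prop) measurable_const)

theorem le_of_mem_hypCross {ℓ : ℕ} {r : ℝ} {x : Fin ℓ → ℝ} (hx : x ∈ hypCross ℓ r) (j : Fin ℓ) :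
    x j ≤ r := by
  obtain ⟨hone, hprod⟩ := hx
  calc x j = x j * 1 := (mul_one _).symm
    _ ≤ x j * ∏ i ∈ Finset.univ.erase j, x i :=
        mul_le_mul_of_nonneg_left (Finset.one_le_prod fun i _ => hone i)
          (zero_le_one.trans (hone j))
    _ = ∏ i, x i := Finset.mul_prod_erase _ _ (Finset.mem_univ j)
    _ ≤ r := hprod

theorem volume_hypCross_ne_top (ℓ : ℕ) (r : ℝ) : volume (hypCross ℓ r) ≠ ⊤ := by
  have hsub : hypCross ℓ r ⊆ Icc (fun _ => 1) (fun _ => r) := fun x hx =>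
    ⟨hx.1, le_of_mem_hypCross hx⟩
  refine ne_top_of_le_ne_top ?_ (measure_mono hsub)
  simp [Real.volume_Icc_pi]

theorem hypVol_one {s : ℝ} (hs : 1 ≤ s) : hypVol 1 s = s - 1 := by
  have hset : hypCross 1 s = Icc (fun _ => 1) (fun _ => s) := by
    ext x
    simp [hypCross, Pi.le_def, Fin.forall_fin_one]
  rw [hypVol_eq, hset, Real.volume_Icc_pi]
  simp [hs]

theorem cons_mem_hypCross_succ_iff {ℓ : ℕ} {r y : ℝ} {x : Fin ℓ → ℝ} :
    Fin.cons y x ∈ hypCross (ℓ + 1) r ↔ 1 ≤ y ∧ (∀ j, 1 ≤ x j) ∧ y * ∏ j, x j ≤ r := by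
  simp only [hypCross, mem_ofPred_eq, Fin.forall_fin_succ, Fin.cons_zero, Fin.cons_succ,
    Fin.prod_cons, and_assoc]

theorem setOf_cons_mem_hypCross_succ {ℓ : ℕ} {r y : ℝ} (hy : 1 ≤ y) :
    {x | Fin.cons y x ∈ hypCross (ℓ + 1) r} = hypCross ℓ (r / y) := by
  ext x
  rw [mem_ofPred_eq, cons_mem_hypCross_succ_iff, hypCross, mem_ofPred_eq,
    le_div_iff₀ (one_pos.trans_le hy), mul_comm]
  exact and_iff_right hy

theorem setOf_cons_mem_hypCross_succ_subset (ℓ : ℕ) (r y : ℝ) :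
    {x | Fin.cons y x ∈ hypCross (ℓ + 1) r} ⊆ hypCross ℓ r := by
  intro x hx
  obtain ⟨hy, hone, hprod⟩ := cons_mem_hypCross_succ_iff.1 hx
  refine ⟨hone, le_trans ?_ hprod⟩
  exact le_mul_of_one_le_left (Finset.prod_nonneg fun j _ => zero_le_one.trans (hone j)) hy

theorem hypVol_div_eq_toReal_volume_slice (ℓ : ℕ) {r y : ℝ} (hy : 1 ≤ y) :
    hypVol ℓ (r / y) = (volume {x | Fin.cons y x ∈ hypCross (ℓ + 1) r}).toReal := by
  rw [setOf_cons_mem_hypCross_succ hy, hypVol_eq]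

theorem integrableOn_hypVol_div (ℓ : ℕ) (r : ℝ) :
    IntegrableOn (fun y => hypVol ℓ (r / y)) (Icc 1 r) := by
  have hbounded : IntegrableOn
      (fun y => (volume {x | Fin.cons y x ∈ hypCross (ℓ + 1) r}).toReal) (Icc 1 r) := by
    refine Measure.integrableOn_of_bounded (M := (volume (hypCross ℓ r)).toReal)
      (by simp [Real.volume_Icc])
      ((measurable_volume_setOf_cons_mem (measurableSet_hypCross _ r)).ennreal_toReal
        |>.aestronglyMeasurable) (ae_of_all _ fun y => ?_)
    rw [Real.norm_of_nonneg ENNReal.toReal_nonneg]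
    exact ENNReal.toReal_mono (volume_hypCross_ne_top ℓ r)
      (measure_mono (setOf_cons_mem_hypCross_succ_subset ℓ r y))
  exact hbounded.congr_fun (fun y hy => (hypVol_div_eq_toReal_volume_slice ℓ hy.1).symm)
    measurableSet_Icc

theorem setIntegral_hypVol_div_le (ℓ : ℕ) (r : ℝ) :
    ∫ y in Icc 1 r, hypVol ℓ (r / y) ≤ hypVol (ℓ + 1) r := by
  have hslice_lt_top : ∀ y, volume {x | Fin.cons y x ∈ hypCross (ℓ + 1) r} < ⊤ := fun y =>
    (measure_mono (setOf_cons_mem_hypCross_succ_subset ℓ r y)).trans_lt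
      (volume_hypCross_ne_top ℓ r).lt_top
  rw [setIntegral_congr_fun measurableSet_Icc fun y hy =>
      hypVol_div_eq_toReal_volume_slice ℓ hy.1,
    integral_toReal (measurable_volume_setOf_cons_mem (measurableSet_hypCross _ r)).aemeasurable
      (ae_of_all _ hslice_lt_top),
    hypVol_eq, volume_eq_lintegral_volume_cons (measurableSet_hypCross _ r)]
  refine ENNReal.toReal_mono ?_ (setLIntegral_le_lintegral _ _)
  rw [← volume_eq_lintegral_volume_cons (measurableSet_hypCross _ r)]
  exact volume_hypCross_ne_top _ r

theorem mul_integral_le_hypVol_succ {ℓ : ℕ} {f : ℝ → ℝ} (hf : Continuous f)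
    (hlow : ∀ s, 1 ≤ s → s * f (Real.log s) ≤ hypVol ℓ s) {r : ℝ} (hr : 1 ≤ r) :
    r * ∫ u in (0 : ℝ)..Real.log r, f u ≤ hypVol (ℓ + 1) r := by
  have hr0 : 0 < r := one_pos.trans_le hr
  have hcont : ContinuousOn (fun y => r * (f (Real.log (r / y)) / y)) (Icc 1 r) := by
    have hne : ∀ y ∈ Icc (1 : ℝ) r, y ≠ 0 := fun y hy => (one_pos.trans_le hy.1).ne'
    exact continuousOn_const.mul ((hf.comp_continuousOn
      ((continuousOn_const.div continuousOn_id hne).log fun y hy =>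
        (div_pos hr0 (one_pos.trans_le hy.1)).ne')).div continuousOn_id hne)
  calc r * ∫ u in (0 : ℝ)..Real.log r, f u
      = ∫ y in Icc 1 r, r * (f (Real.log (r / y)) / y) := by
        rw [← intervalIntegral.integral_comp_log_div_div hf hr0,
          ← intervalIntegral.integral_const_mul, intervalIntegral.integral_of_le hr,
          integral_Icc_eq_integral_Ioc]
    _ ≤ ∫ y in Icc 1 r, hypVol ℓ (r / y) := by
      refine setIntegral_mono_on hcont.integrableOn_Icc (integrableOn_hypVol_div ℓ r)
        measurableSet_Icc fun y hy => ?_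
      have hy0 : 0 < y := one_pos.trans_le hy.1
      calc r * (f (Real.log (r / y)) / y) = r / y * f (Real.log (r / y)) := by ring
        _ ≤ hypVol ℓ (r / y) := hlow _ ((one_le_div hy0).2 hy.2)
    _ ≤ hypVol (ℓ + 1) r := setIntegral_hypVol_div_le ℓ r

open Nat in
noncomputable def hypLower (k : ℕ) (u : ℝ) : ℝ := u ^ (k + 1) / (k + 1)! - u ^ k / k !

theorem continuous_hypLower (k : ℕ) : Continuous (hypLower k) := by
  unfold hypLower
  fun_prop

theorem integral_hypLower (k : ℕ) (L : ℝ) :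
    ∫ u in (0 : ℝ)..L, hypLower k u = hypLower (k + 1) L := by
  have hint (m : ℕ) :
      ∫ u in (0 : ℝ)..L, u ^ m / m.factorial = L ^ (m + 1) / (m + 1).factorial := by
    rw [intervalIntegral.integral_div, integral_pow, Nat.factorial_succ]
    push_cast
    field_simp
    ring
  simp only [hypLower]
  rw [intervalIntegral.integral_sub ((continuous_pow _).div_const _ |>.intervalIntegrable _ _)
    ((continuous_pow _).div_const _ |>.intervalIntegrable _ _), hint, hint]

theorem hypLower_zero (u : ℝ) : hypLower 0 u = u - 1 := by
  simp [hypLower]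

theorem mul_hypLower_zero_le_hypVol_two {r : ℝ} (hr : 1 ≤ r) :
    r * hypLower 0 (Real.log r) ≤ hypVol 2 r := by
  have hlow : ∀ s, 1 ≤ s → s * (1 - Real.exp (-Real.log s)) ≤ hypVol 1 s := fun s hs => by
    rw [hypVol_one hs, Real.exp_neg, Real.exp_log (one_pos.trans_le hs), mul_sub,
      mul_inv_cancel₀ (one_pos.trans_le hs).ne', mul_one]
  have hint (L : ℝ) : ∫ u in (0 : ℝ)..L, (1 - Real.exp (-u)) = L - 1 + Real.exp (-L) := by
    rw [intervalIntegral.integral_sub intervalIntegrable_const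
      (continuous_neg.rexp.intervalIntegrable _ _), intervalIntegral.integral_comp_neg,
      intervalIntegral.integral_const, integral_exp, neg_zero, Real.exp_zero, smul_eq_mul,
      mul_one, sub_zero]
    ring
  calc r * hypLower 0 (Real.log r)
      ≤ r * (Real.log r - 1 + Real.exp (-Real.log r)) := by
        rw [hypLower_zero]
        have hexp := Real.exp_pos (-Real.log r)
        gcongr
        linarith
    _ ≤ hypVol 2 r := hint _ ▸ mul_integral_le_hypVol_succ (by fun_prop) hlow hr

theorem mul_hypLower_le_hypVol (k : ℕ) {r : ℝ} (hr : 1 ≤ r) :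
    r * hypLower k (Real.log r) ≤ hypVol (k + 2) r := by
  induction k generalizing r with
  | zero => exact mul_hypLower_zero_le_hypVol_two hr
  | succ k ih =>
    rw [← integral_hypLower]
    exact mul_integral_le_hypVol_succ (continuous_hypLower k) (fun _ hs => ih hs) hr

theorem stmt2 (ℓ : ℕ) (hℓ : 2 ≤ ℓ) (r : ℝ) (hr : 1 ≤ r) :
    r * ((Real.log r) ^ (ℓ - 1) / (Nat.factorial (ℓ - 1))
        - (Real.log r) ^ (ℓ - 2) / (Nat.factorial (ℓ - 2))) ≤ hypVol ℓ r := by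
  obtain ⟨k, rfl⟩ : ∃ k, ℓ = k + 2 := ⟨ℓ - 2, by omega⟩
  simpa [hypLower] using mul_hypLower_le_hypVol k hr
end

section
/- Let $d \ge 1$ and let $r = e^d$ (or any real $r$ with $\ln r = d$). Then $C(\lfloor r \rfloor, d) \le (3e^2)^d$, where $C(r,d) = \#\{k \in \mathbb{Z}^d : \prod_{j=1}^d (1+|k_j|) \le r\}$. -/
/-!
Rankin's trick: every `k` with `∏ (1 + |k_j|) ≤ n` contributes at least `1` to
`∑_k (n / ∏ (1 + |k_j|))²`, and this sum factorises as `n² (∑_{m ∈ ℤ} (1 + |m|)⁻²)^d`.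
The one-dimensional sum is `2 ζ(2) - 1 ≤ 3`, so `C(n, d) ≤ 3^d n²`, and `n ≤ r = e^d`.
-/

open Finset

/-- `C r d` : number of lattice points `k ∈ ℤ^d` with `∏ (1+|k_j|) ≤ r`. -/
noncomputable def latticeCount (r d : ℕ) : ℕ :=
  Set.ncard {k : Fin d → ℤ | ∏ j, (1 + (k j).natAbs) ≤ r}

lemma card_filter_le_sum_div_pow {α : Type*} (s : Finset α) {f : α → ℝ} {c : ℝ} (hc : 0 ≤ c)
    (hf : ∀ x ∈ s, 0 < f x) (p : ℕ) :
    (#{x ∈ s | f x ≤ c} : ℝ) ≤ ∑ x ∈ s, (c / f x) ^ p := by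
  rw [card_filter, Nat.cast_sum]
  refine sum_le_sum fun x hx => ?_
  split_ifs with h
  · exact_mod_cast one_le_pow₀ ((one_le_div (hf x hx)).2 h)
  · exact_mod_cast pow_nonneg (div_nonneg hc (hf x hx).le) p

lemma sum_Icc_inv_one_add_natAbs_sq_le_three (N : ℕ) :
    ∑ m ∈ Icc (-N : ℤ) N, ((1 + m.natAbs : ℝ) ^ 2)⁻¹ ≤ 3 := by
  have h_even : Function.Even fun m : ℤ => ((1 + m.natAbs : ℝ) ^ 2)⁻¹ := fun m => by
    simp only [Int.natAbs_neg]
  have h_half : ∑ m ∈ range (N + 1), ((1 + m : ℝ) ^ 2)⁻¹ ≤ 2 := by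
    have h := sum_Ioo_inv_sq_le (α := ℝ) 0 (N + 2)
    rw [← Ico_add_one_left_eq_Ioo, sum_Ico_eq_sum_range] at h
    simpa [add_comm] using h
  rw [sum_Icc_of_even_eq_range h_even, nsmul_eq_mul]
  norm_num
  linarith

lemma natAbs_le_of_prod_one_add_natAbs_le {d n : ℕ} {k : Fin d → ℤ}
    (hk : ∏ j, (1 + (k j).natAbs) ≤ n) (i : Fin d) : (k i).natAbs ≤ n := by
  have := (single_le_prod' (f := fun j => 1 + (k j).natAbs)
    (fun _ _ => Nat.le_add_right 1 _) (mem_univ i)).trans hk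
  omega

theorem latticeCount_le (n d : ℕ) : (latticeCount n d : ℝ) ≤ 3 ^ d * n ^ 2 := by
  set box := Fintype.piFinset fun _ : Fin d => Icc (-n : ℤ) n
  set P : (Fin d → ℤ) → ℝ := fun k => ∏ j, (1 + (k j).natAbs : ℝ)
  have hP : ∀ k ∈ box, 0 < P k := fun k _ => by positivity
  have h_count : latticeCount n d = #{k ∈ box | P k ≤ n} := by
    rw [latticeCount, ← Set.ncard_coe_finset]
    congr 1
    ext k
    simp only [Set.mem_ofPred_eq, coe_filter, P]
    constructor
    · intro hk
      refine ⟨Fintype.mem_piFinset.2 fun i => mem_Icc.2 ?_, by exact_mod_cast hk⟩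
      have := natAbs_le_of_prod_one_add_natAbs_le hk i
      omega
    · exact fun hk => mod_cast hk.2
  calc (latticeCount n d : ℝ) ≤ ∑ k ∈ box, (n / P k) ^ 2 := by
        rw [h_count]
        exact card_filter_le_sum_div_pow box (Nat.cast_nonneg n) hP 2
    _ = n ^ 2 * ∏ _j : Fin d, ∑ m ∈ Icc (-n : ℤ) n, ((1 + m.natAbs : ℝ) ^ 2)⁻¹ := by
        simp only [box, P, prod_univ_sum, mul_sum, div_eq_mul_inv, mul_pow, inv_pow, prod_pow,
          prod_inv_distrib]
    _ ≤ n ^ 2 * ∏ _j : Fin d, (3 : ℝ) := by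
        gcongr
        exact sum_Icc_inv_one_add_natAbs_sq_le_three n
    _ = 3 ^ d * n ^ 2 := by rw [prod_const, card_univ, Fintype.card_fin, mul_comm]

lemma natFloor_le_exp_log (r : ℝ) : (⌊r⌋₊ : ℝ) ≤ Real.exp (Real.log r) := by
  rcases le_or_gt r 0 with hr | hr
  · rw [Nat.floor_of_nonpos hr, Nat.cast_zero]
    exact (Real.exp_pos _).le
  · exact (Nat.floor_le hr.le).trans (Real.le_exp_log r)

theorem stmt9_general (d : ℕ) (r : ℝ) (hr : Real.log r = d) :
    (latticeCount ⌊r⌋₊ d : ℝ) ≤ (3 * Real.exp 2) ^ d := by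
  have h_floor : (⌊r⌋₊ : ℝ) ≤ Real.exp d := hr ▸ natFloor_le_exp_log r
  calc (latticeCount ⌊r⌋₊ d : ℝ) ≤ 3 ^ d * (⌊r⌋₊ : ℝ) ^ 2 := latticeCount_le _ d
    _ ≤ 3 ^ d * Real.exp d ^ 2 := by gcongr
    _ = (3 * Real.exp 2) ^ d := by
        rw [mul_pow, ← Real.exp_nat_mul, ← Real.exp_nat_mul, mul_comm (d : ℝ), Nat.cast_ofNat]

theorem stmt9 (d : ℕ) (hd : 1 ≤ d) (r : ℝ) (hr : Real.log r = d) :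
    (latticeCount ⌊r⌋₊ d : ℝ) ≤ (3 * Real.exp 2) ^ d :=
  stmt9_general d r hr
end

section
/- Let $d \ge 2$ and let $r \in \mathbb{N}$ with $1 \le r \le 2^d$. Then $C(r,d) \le e^2 \, r^{2 + \log_2 d}$, where $C(r,d) = \#\{k \in \mathbb{Z}^d : \prod_{j=1}^d (1+|k_j|) \le r\}$. -/
private lemma telescope (r : ℕ) :
    ∑ n ∈ Finset.Icc (1:ℤ) (r:ℤ), (1 / ((n:ℝ) * ((n:ℝ) + 1))) = 1 - 1/((r:ℝ)+1) := by
  induction r with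
  | zero => simp
  | succ r ih =>
    have hins : Finset.Icc (1:ℤ) ((r:ℕ)+1 : ℕ) = insert ((r:ℤ)+1) (Finset.Icc (1:ℤ) (r:ℤ)) := by
      ext n
      simp only [Finset.mem_insert, Finset.mem_Icc]
      push_cast
      omega
    have hnm : ((r:ℤ)+1) ∉ Finset.Icc (1:ℤ) (r:ℤ) := by
      simp only [Finset.mem_Icc]; omega
    rw [hins, Finset.sum_insert hnm, ih]
    have h1 : ((r:ℝ) + 1) ≠ 0 := by positivity
    have h2 : ((r:ℝ) + 2) ≠ 0 := by positivity
    push_cast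
    field_simp
    ring

theorem stmt10 (d r : ℕ) (hd : 2 ≤ d) (hr1 : 1 ≤ r) (hr2 : r ≤ 2 ^ d) :
    (latticeCount r d : ℝ) ≤
      Real.exp 2 * (r : ℝ) ^ ((2 : ℝ) + Real.logb 2 d) := by
  classical
  set s : ℝ := 2 + Real.logb 2 d with hs_def
  have hd0 : (0:ℝ) < d := by
    have : (0:ℕ) < d := by omega
    exact_mod_cast this
  have hlogb : (1:ℝ) ≤ Real.logb 2 d := by
    rw [Real.le_logb_iff_rpow_le one_lt_two hd0, Real.rpow_one]
    exact_mod_cast hd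
  have hs2 : 2 ≤ s := by simp only [hs_def]; linarith
  have hs0 : (0:ℝ) ≤ s := by linarith
  have h22 : (2:ℝ) ^ (2:ℝ) = 4 := by
    rw [show (2:ℝ) ^ (2:ℝ) = (2:ℝ) ^ ((2:ℕ):ℝ) by norm_num, Real.rpow_natCast]
    norm_num
  have h2s : (2:ℝ) ^ s = 4 * d := by
    rw [hs_def, Real.rpow_add two_pos, Real.rpow_logb two_pos (by norm_num) hd0, h22]
  -- finite model
  set B : Finset (Fin d → ℤ) := Fintype.piFinset (fun _ => Finset.Icc (-(r:ℤ)) (r:ℤ)) with hB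
  set T : Finset (Fin d → ℤ) := B.filter (fun k => ∏ j, (1 + (k j).natAbs) ≤ r) with hT
  have hcount : (latticeCount r d : ℝ) = (T.card : ℝ) := by
    have : {k : Fin d → ℤ | ∏ j, (1 + (k j).natAbs) ≤ r} = ↑T := by
      ext k
      simp only [Set.mem_setOf_eq, hT, Finset.coe_filter, hB, Fintype.mem_piFinset,
        Finset.mem_Icc]
      constructor
      · intro h
        refine ⟨fun j => ?_, h⟩
        have h1 : 1 + (k j).natAbs ≤ ∏ i, (1 + (k i).natAbs) :=
          Finset.single_le_prod' (f := fun i => 1 + (k i).natAbs)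
            (fun i _ => Nat.le_add_right 1 _) (Finset.mem_univ j)
        have h2 : (k j).natAbs ≤ r := by omega
        omega
      · exact fun h => h.2
    rw [latticeCount, this, Set.ncard_coe_finset]
  set F : ℤ → ℝ := fun n => (1 + ((n.natAbs : ℕ) : ℝ)) ^ (-s) with hF
  have hFnn : ∀ n : ℤ, 0 ≤ F n := fun n => Real.rpow_nonneg (by positivity) _
  -- per-point bound
  have hterm : ∀ k ∈ T, (1:ℝ) ≤ (r:ℝ) ^ s * ∏ j, F (k j) := by
    intro k hk
    have hkr : ∏ j, (1 + (k j).natAbs) ≤ r := (Finset.mem_filter.mp hk).2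
    set P : ℝ := ∏ j, (1 + (((k j).natAbs : ℕ) : ℝ)) with hP
    have hP1 : (1:ℝ) ≤ P := by
      rw [hP]
      have := Finset.prod_le_prod (s := Finset.univ) (f := fun _ : Fin d => (1:ℝ))
        (g := fun j => 1 + (((k j).natAbs : ℕ) : ℝ)) (fun _ _ => by norm_num)
        (fun j _ => by
          show (1:ℝ) ≤ 1 + (((k j).natAbs : ℕ) : ℝ)
          have : (0:ℝ) ≤ (((k j).natAbs : ℕ) : ℝ) := Nat.cast_nonneg _
          linarith)
      simpa using this
    have hP0 : (0:ℝ) < P := lt_of_lt_of_le one_pos hP1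
    have hPr : P ≤ (r:ℝ) := by
      have : ((∏ j, (1 + (k j).natAbs) : ℕ) : ℝ) ≤ ((r:ℕ):ℝ) := by exact_mod_cast hkr
      simpa [hP, Nat.cast_prod] using this
    have hprod : ∏ j, F (k j) = P ^ (-s) := by
      rw [hP, ← Real.finset_prod_rpow _ _ (fun j _ => by positivity)]
    rw [hprod, Real.rpow_neg hP0.le, ← div_eq_mul_inv, ← Real.div_rpow (by positivity) hP0.le]
    exact Real.one_le_rpow (by rw [le_div_iff₀ hP0]; linarith) hs0
  -- per-coordinate sum bound
  have hcoord : ∑ n ∈ Finset.Icc (-(r:ℤ)) (r:ℤ), F n ≤ 1 + 2 / d := by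
    have hsplit : Finset.Icc (-(r:ℤ)) (r:ℤ)
        = Finset.Icc (-(r:ℤ)) (-1) ∪ Finset.Icc (0:ℤ) (r:ℤ) := by
      ext n; simp only [Finset.mem_Icc, Finset.mem_union]; omega
    have hdisj : Disjoint (Finset.Icc (-(r:ℤ)) (-1)) (Finset.Icc (0:ℤ) (r:ℤ)) := by
      rw [Finset.disjoint_left]
      intro n h1 h2
      simp only [Finset.mem_Icc] at h1 h2
      omega
    have himg : Finset.Icc (-(r:ℤ)) (-1) = (Finset.Icc (1:ℤ) (r:ℤ)).image (fun n => -n) := by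
      ext n
      simp only [Finset.mem_Icc, Finset.mem_image]
      constructor
      · intro h; exact ⟨-n, ⟨by omega, by omega⟩, by omega⟩
      · rintro ⟨m, hm, rfl⟩; omega
    have hneg : ∑ n ∈ Finset.Icc (-(r:ℤ)) (-1), F n = ∑ n ∈ Finset.Icc (1:ℤ) (r:ℤ), F n := by
      rw [himg, Finset.sum_image (fun a _ b _ h => by omega)]
      exact Finset.sum_congr rfl (fun n _ => by simp [hF, Int.natAbs_neg])
    have hposplit : Finset.Icc (0:ℤ) (r:ℤ) = insert 0 (Finset.Icc (1:ℤ) (r:ℤ)) := by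
      ext n; simp only [Finset.mem_Icc, Finset.mem_insert]; omega
    have h0nm : (0:ℤ) ∉ Finset.Icc (1:ℤ) (r:ℤ) := by simp
    have hF0 : F 0 = 1 := by simp [hF]
    -- bound the positive tail
    have htail : ∑ n ∈ Finset.Icc (1:ℤ) (r:ℤ), F n ≤ 1 / d := by
      have hle : ∀ n ∈ Finset.Icc (1:ℤ) (r:ℤ),
          F n ≤ (1/(d:ℝ)) * (1 / ((n:ℝ) * ((n:ℝ) + 1))) := by
        intro n hn
        simp only [Finset.mem_Icc] at hn
        have hn1 : (1:ℝ) ≤ (n:ℝ) := by exact_mod_cast hn.1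
        have h0n : (0:ℝ) ≤ (n:ℝ) := by linarith
        have hnabs : ((n.natAbs : ℕ) : ℝ) = (n:ℝ) := by
          rw [Nat.cast_natAbs]
          exact_mod_cast abs_of_nonneg (show (0:ℤ) ≤ n by omega)
        have hb2 : (2:ℝ) ≤ 1 + ((n.natAbs : ℕ) : ℝ) := by rw [hnabs]; linarith
        have hb0 : (0:ℝ) < 1 + ((n.natAbs : ℕ) : ℝ) := by linarith
        have hsplit' : F n = (1 + ((n.natAbs : ℕ) : ℝ)) ^ (-(2:ℝ))
            * (1 + ((n.natAbs : ℕ) : ℝ)) ^ ((2:ℝ) - s) := by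
          rw [hF, ← Real.rpow_add hb0]; ring_nf
        rw [hsplit']
        have hpart1 : (1 + ((n.natAbs : ℕ) : ℝ)) ^ (-(2:ℝ)) ≤ 1 / ((n:ℝ) * ((n:ℝ) + 1)) := by
          rw [Real.rpow_neg hb0.le, show ((2:ℝ) = ((2:ℕ):ℝ)) by norm_num,
            Real.rpow_natCast, hnabs]
          rw [one_div]
          apply inv_anti₀ (by positivity)
          nlinarith
        have hpart2 : (1 + ((n.natAbs : ℕ) : ℝ)) ^ ((2:ℝ) - s) ≤ 1 / (d:ℝ) := by
          have h1 : (1 + ((n.natAbs : ℕ) : ℝ)) ^ ((2:ℝ) - s) ≤ (2:ℝ) ^ ((2:ℝ) - s) :=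
            Real.rpow_le_rpow_of_nonpos two_pos hb2 (by linarith)
          have h2 : (2:ℝ) ^ ((2:ℝ) - s) = 1 / (d:ℝ) := by
            rw [Real.rpow_sub two_pos, h2s, h22]
            rw [div_eq_div_iff (by positivity) (by positivity)]
            ring
          linarith
        calc (1 + ((n.natAbs : ℕ) : ℝ)) ^ (-(2:ℝ)) * (1 + ((n.natAbs : ℕ) : ℝ)) ^ ((2:ℝ) - s)
            ≤ (1 / ((n:ℝ) * ((n:ℝ) + 1))) * (1/(d:ℝ)) := by
              apply mul_le_mul hpart1 hpart2 (Real.rpow_nonneg hb0.le _) (by positivity)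
          _ = (1/(d:ℝ)) * (1 / ((n:ℝ) * ((n:ℝ) + 1))) := by ring
      calc ∑ n ∈ Finset.Icc (1:ℤ) (r:ℤ), F n
          ≤ ∑ n ∈ Finset.Icc (1:ℤ) (r:ℤ), (1/(d:ℝ)) * (1 / ((n:ℝ) * ((n:ℝ) + 1))) :=
            Finset.sum_le_sum hle
        _ = (1/(d:ℝ)) * (1 - 1/((r:ℝ)+1)) := by rw [← Finset.mul_sum, telescope]
        _ ≤ 1 / d := by
            have h1 : (0:ℝ) < 1/((r:ℝ)+1) := by positivity
            have h3 : 1/(d:ℝ) * (1 - 1/((r:ℝ)+1)) ≤ 1/(d:ℝ) * 1 :=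
              mul_le_mul_of_nonneg_left (by linarith) (by positivity)
            linarith
    rw [hsplit, Finset.sum_union hdisj, hneg, hposplit, Finset.sum_insert h0nm, hF0]
    have h2d : 2/(d:ℝ) = 1/(d:ℝ) + 1/(d:ℝ) := by ring
    linarith
  -- assemble
  have hprodbound : ∏ _j : Fin d, (∑ n ∈ Finset.Icc (-(r:ℤ)) (r:ℤ), F n) ≤ Real.exp 2 := by
    have hgnn : (0:ℝ) ≤ ∑ n ∈ Finset.Icc (-(r:ℤ)) (r:ℤ), F n :=
      Finset.sum_nonneg (fun n _ => hFnn n)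
    calc ∏ _j : Fin d, (∑ n ∈ Finset.Icc (-(r:ℤ)) (r:ℤ), F n)
        ≤ ∏ _j : Fin d, (1 + 2/(d:ℝ)) :=
          Finset.prod_le_prod (fun _ _ => hgnn) (fun _ _ => hcoord)
      _ = (1 + 2/(d:ℝ)) ^ d := by simp [Finset.prod_const]
      _ ≤ (Real.exp (2/(d:ℝ))) ^ d := by
          apply pow_le_pow_left₀ (by positivity)
          have := Real.add_one_le_exp (2/(d:ℝ))
          linarith
      _ = Real.exp 2 := by
          rw [← Real.exp_nat_mul]
          congr 1
          field_simp
  have hrs0 : (0:ℝ) ≤ (r:ℝ) ^ s := Real.rpow_nonneg (by positivity) _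
  calc (latticeCount r d : ℝ) = (T.card : ℝ) := hcount
    _ = ∑ _k ∈ T, (1:ℝ) := by simp
    _ ≤ ∑ k ∈ T, (r:ℝ) ^ s * ∏ j, F (k j) := Finset.sum_le_sum hterm
    _ = (r:ℝ) ^ s * ∑ k ∈ T, ∏ j, F (k j) := by rw [Finset.mul_sum]
    _ ≤ (r:ℝ) ^ s * ∑ k ∈ B, ∏ j, F (k j) := by
        apply mul_le_mul_of_nonneg_left _ hrs0
        apply Finset.sum_le_sum_of_subset_of_nonneg (Finset.filter_subset _ _)
        intro k _ _
        exact Finset.prod_nonneg (fun j _ => hFnn _)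
    _ = (r:ℝ) ^ s * ∏ _j : Fin d, (∑ n ∈ Finset.Icc (-(r:ℤ)) (r:ℤ), F n) := by
        rw [Finset.prod_univ_sum]
    _ ≤ (r:ℝ) ^ s * Real.exp 2 := mul_le_mul_of_nonneg_left hprodbound hrs0
    _ = Real.exp 2 * (r:ℝ) ^ ((2:ℝ) + Real.logb 2 d) := by rw [mul_comm, hs_def]
end

section
/- For every $m \in \mathbb{N}$, the function $f(x) = \frac{(1+x)^m}{1 + x + x^2 + \dots + x^m}$ is decreasing on $[1,\infty)$, and consequently $\sup_{k \in \mathbb{N}, k \ge 1} \frac{(1+k^2)^m}{1 + k^2 + k^4 + \dots + k^{2m}} = \frac{2^m}{m+1}$ (attained at $k=1$). -/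
/-!
Writing `S(x) = ∑_{i ≤ m} x ^ i`, the derivative of `(1 + x) ^ m / S(x)` has the sign of
`m S(x) - (1 + x) S'(x) = -∑_{i < m} (2i + 1 - m) x ^ i`. The coefficients are antisymmetric
under `i ↦ m - 1 - i`, so pairing terms gives `∑_{i < m} (2i + 1 - m) (x ^ i - x ^ (m - 1 - i)) / 2`,
which is nonnegative for `x ≥ 1`. Hence the function decreases on `[1, ∞)`, and the supremum over
`x = k ^ 2` is its value `2 ^ m / (m + 1)` at `k = 1`.
-/

open Finset

theorem sum_range_two_mul_add_one_sub_mul_pow_nonneg (n : ℕ) {x : ℝ} (hx : 1 ≤ x) :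
    0 ≤ ∑ i ∈ range n, (2 * i + 1 - n : ℝ) * x ^ i := by
  have hpair : ∀ i ∈ range n, 0 ≤ (2 * i + 1 - n : ℝ) * (x ^ i - x ^ (n - 1 - i)) := by
    intro i hi
    have hin := mem_range.mp hi
    rcases le_total (n - 1 - i) i with h | h
    · have : (n : ℝ) ≤ 2 * i + 1 := by exact_mod_cast (by omega : n ≤ 2 * i + 1)
      exact mul_nonneg (by linarith) (sub_nonneg.mpr (pow_le_pow_right₀ hx h))
    · have : (2 * i + 1 : ℝ) ≤ n := by exact_mod_cast (by omega : 2 * i + 1 ≤ n)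
      exact mul_nonneg_of_nonpos_of_nonpos (by linarith)
        (sub_nonpos.mpr (pow_le_pow_right₀ hx h))
  have hreflect : ∑ i ∈ range n, (2 * i + 1 - n : ℝ) * x ^ i
      = ∑ i ∈ range n, -(2 * i + 1 - n : ℝ) * x ^ (n - 1 - i) := by
    rw [← sum_range_reflect]
    refine sum_congr rfl fun i hi => ?_
    have hin := mem_range.mp hi
    rw [Nat.cast_sub (by omega), Nat.cast_sub (by omega)]
    push_cast
    ring
  have htwice : 2 * ∑ i ∈ range n, (2 * i + 1 - n : ℝ) * x ^ i
      = ∑ i ∈ range n, (2 * i + 1 - n : ℝ) * (x ^ i - x ^ (n - 1 - i)) := by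
    rw [two_mul]
    nth_rewrite 2 [hreflect]
    rw [← sum_add_distrib]
    exact sum_congr rfl fun i _ => by ring
  linarith [sum_nonneg hpair]

theorem hasDerivAt_sum_range_pow (m : ℕ) (x : ℝ) :
    HasDerivAt (fun x : ℝ => ∑ i ∈ range (m + 1), x ^ i)
      (∑ i ∈ range m, ((i : ℝ) + 1) * x ^ i) x := by
  have h := HasDerivAt.fun_sum (u := range (m + 1)) fun i _ => hasDerivAt_pow i x
  rw [sum_range_succ'] at h
  simpa using h

theorem one_add_mul_sum_range_sub_mul_sum_range_pow (m : ℕ) (x : ℝ) :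
    (1 + x) * ∑ i ∈ range m, ((i : ℝ) + 1) * x ^ i - m * ∑ i ∈ range (m + 1), x ^ i
      = ∑ i ∈ range m, (2 * i + 1 - m : ℝ) * x ^ i := by
  induction m with
  | zero => simp
  | succ m ih =>
    have hstep : ∑ i ∈ range m, (2 * i + 1 - (m + 1 : ℕ) : ℝ) * x ^ i
        = ∑ i ∈ range m, (2 * i + 1 - m : ℝ) * x ^ i - ∑ i ∈ range m, x ^ i := by
      rw [← sum_sub_distrib]
      exact sum_congr rfl fun i _ => by push_cast; ring
    rw [sum_range_succ (fun i : ℕ => ((i : ℝ) + 1) * x ^ i),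
      sum_range_succ (fun i : ℕ => (2 * (i : ℝ) + 1 - ((m + 1 : ℕ) : ℝ)) * x ^ i), hstep,
      sum_range_succ (fun i => x ^ i) (m + 1)]
    push_cast
    linear_combination ih - sum_range_succ (fun i => x ^ i) m

theorem mul_sum_range_pow_le (m : ℕ) {x : ℝ} (hx : 1 ≤ x) :
    m * ∑ i ∈ range (m + 1), x ^ i ≤ (1 + x) * ∑ i ∈ range m, ((i : ℝ) + 1) * x ^ i := by
  have := one_add_mul_sum_range_sub_mul_sum_range_pow m x
  linarith [sum_range_two_mul_add_one_sub_mul_pow_nonneg m hx]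

theorem antitoneOn_one_add_pow_div_sum_range_pow (m : ℕ) :
    AntitoneOn (fun x : ℝ => (1 + x) ^ m / ∑ i ∈ range (m + 1), x ^ i) (Set.Ici 1) := by
  have hS : ∀ x : ℝ, 1 ≤ x → 0 < ∑ i ∈ range (m + 1), x ^ i := fun x hx =>
    geom_sum_pos (by linarith) m.succ_ne_zero
  have hderiv : ∀ x : ℝ, 1 ≤ x → HasDerivAt (fun x : ℝ => (1 + x) ^ m / ∑ i ∈ range (m + 1), x ^ i)
      ((m * (1 + x) ^ (m - 1) * ∑ i ∈ range (m + 1), x ^ i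
        - (1 + x) ^ m * ∑ i ∈ range m, ((i : ℝ) + 1) * x ^ i)
        / (∑ i ∈ range (m + 1), x ^ i) ^ 2) x := fun x hx => by
    have hpow : HasDerivAt (fun x : ℝ => (1 + x) ^ m) (m * (1 + x) ^ (m - 1)) x := by
      simpa using ((hasDerivAt_id x).const_add 1).fun_pow m
    exact hpow.div (hasDerivAt_sum_range_pow m x) (hS x hx).ne'
  refine antitoneOn_of_hasDerivWithinAt_nonpos (convex_Ici 1)
    (fun x hx => (hderiv x hx).continuousAt.continuousWithinAt)
    (fun x hx => (hderiv x (interior_subset hx)).hasDerivWithinAt) fun x hx => ?_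
  have hx : 1 ≤ x := interior_subset hx
  set S := ∑ i ∈ range (m + 1), x ^ i
  set S' := ∑ i ∈ range m, ((i : ℝ) + 1) * x ^ i
  refine div_nonpos_of_nonpos_of_nonneg ?_ (sq_nonneg _)
  have hmul : (m : ℝ) * (1 + x) ^ (m - 1) * (1 + x) = m * (1 + x) ^ m := by
    cases m <;> simp [pow_succ, mul_assoc]
  have hfactor : (1 + x) * (m * (1 + x) ^ (m - 1) * S - (1 + x) ^ m * S')
      = (1 + x) ^ m * (m * S - (1 + x) * S') := by
    linear_combination S * hmul
  refine nonpos_of_mul_nonpos_right (hfactor ▸ ?_) (by linarith : (0 : ℝ) < 1 + x)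
  exact mul_nonpos_of_nonneg_of_nonpos (by positivity) (by linarith [mul_sum_range_pow_le m hx])

theorem stmt13 (m : ℕ) :
    AntitoneOn (fun x : ℝ => (1 + x) ^ m / ∑ α ∈ Finset.range (m + 1), x ^ α)
      (Set.Ici (1 : ℝ)) ∧
    IsGreatest
      {y : ℝ | ∃ k : ℕ, 1 ≤ k ∧
        y = (1 + (k : ℝ) ^ 2) ^ m / ∑ α ∈ Finset.range (m + 1), ((k : ℝ) ^ 2) ^ α}
      (2 ^ m / (m + 1)) := by
  have hanti := antitoneOn_one_add_pow_div_sum_range_pow m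
  have hone : (1 + 1 : ℝ) ^ m / ∑ α ∈ range (m + 1), (1 : ℝ) ^ α = 2 ^ m / (m + 1) := by
    norm_num
  refine ⟨hanti, ⟨1, le_rfl, by simpa using hone.symm⟩, ?_⟩
  rintro y ⟨k, hk, rfl⟩
  have hk2 : (1 : ℝ) ≤ (k : ℝ) ^ 2 := one_le_pow₀ (by exact_mod_cast hk)
  exact hone ▸ hanti Set.self_mem_Ici hk2 hk2
end

section
/- Let $d \ge 1$ and let $(\sigma_n)_{n \ge 1}$ be the non-increasing rearrangement of the family $\left(\prod_{\ell=1}^d (1+|k_{\ell}|)^{-1}\right)_{k \in \mathbb{Z}^d}$. Then for all $n > e^{d/2}$, $\sigma_n \le \frac{1}{n}\left(\frac{2e \ln n}{d}\right)^d$. -/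
/-! For every `p > 1`, monotonicity of `σ` and the product structure give
`n σ_n ^ p ≤ ∑_{j ≤ n} σ_j ^ p ≤ (∑_{m ∈ ℤ} (1 + |m|) ^ (-p)) ^ d ≤ ((p + 1) / (p - 1)) ^ d`,
the last step by comparing the one-dimensional tail with `∫_1^∞ x ^ (-p) dx`. Hence
`σ_n ≤ n ^ (-1/p) ((p + 1) / (p - 1)) ^ d`, and the choice `(p + 1) / (p - 1) = 2 ln n / d`
gives `n ^ (-1/p) ≤ e ^ d / n`. -/

open Finset Real

theorem sum_range_add_two_rpow_neg_le {p : ℝ} (hp : 1 < p) (N : ℕ) :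
    ∑ i ∈ range N, ((i : ℝ) + 2) ^ (-p) ≤ 1 / (p - 1) := by
  have hanti : AntitoneOn (fun x : ℝ => x ^ (-p)) (Set.Icc 1 (1 + N)) :=
    (antitoneOn_rpow_Ioi_of_exponent_nonpos (by linarith)).mono
      fun x hx => lt_of_lt_of_le one_pos hx.1
  have hint : ∫ x in (1 : ℝ)..1 + N, x ^ (-p) = (1 - (1 + N : ℝ) ^ (1 - p)) / (p - 1) := by
    rw [integral_rpow (Or.inr ⟨by linarith, by simp⟩), one_rpow, show -p + 1 = -(p - 1) by ring, div_neg, ← neg_div, neg_sub,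
      show -(p - 1) = 1 - p by ring]
  calc ∑ i ∈ range N, ((i : ℝ) + 2) ^ (-p)
      = ∑ i ∈ range N, (1 + ((i + 1 : ℕ) : ℝ)) ^ (-p) := by
        refine sum_congr rfl fun i _ => ?_; push_cast; ring_nf
    _ ≤ (1 - (1 + N : ℝ) ^ (1 - p)) / (p - 1) := hint ▸ hanti.sum_le_integral
    _ ≤ 1 / (p - 1) := by
        have : 0 < p - 1 := by linarith
        gcongr
        linarith [rpow_nonneg (by positivity : (0 : ℝ) ≤ 1 + N) (1 - p)]

theorem sum_one_add_abs_rpow_neg_le {p : ℝ} (hp : 1 < p) (T : Finset ℤ) :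
    ∑ m ∈ T, ((1 : ℝ) + |m|) ^ (-p) ≤ (p + 1) / (p - 1) := by
  set g : ℤ → ℝ := fun m => ((1 : ℝ) + |m|) ^ (-p)
  have hg : ∀ m, 0 ≤ g m := fun m => rpow_nonneg (by positivity) _
  have hg_nat : ∀ n : ℕ, g n = ((n : ℝ) + 1) ^ (-p) := fun n => by
    simp only [g, Int.abs_natCast]; push_cast; ring_nf
  have hg_neg : ∀ n : ℕ, g (-(n + 1)) = ((n : ℝ) + 2) ^ (-p) := fun n => by
    simp only [g, abs_neg, abs_of_nonneg (by positivity : (0 : ℤ) ≤ n + 1)]; push_cast; ring_nf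
  have hneg : ∀ N, ∑ n ∈ range N, g (-(n + 1)) ≤ 1 / (p - 1) := fun N => by
    simpa only [hg_neg] using sum_range_add_two_rpow_neg_le hp N
  have hnat : ∀ N, ∑ n ∈ range N, g n ≤ 1 + 1 / (p - 1) := fun N =>
    calc ∑ n ∈ range N, g n ≤ ∑ n ∈ range (N + 1), g n :=
          sum_le_sum_of_subset_of_nonneg (range_subset_range.2 N.le_succ) fun _ _ _ => hg _
      _ = 1 + ∑ n ∈ range N, ((n : ℝ) + 2) ^ (-p) := by
          simp only [sum_range_succ', hg_nat]; push_cast; ring_nf; rw [one_rpow, add_comm]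
      _ ≤ 1 + 1 / (p - 1) := by linarith [sum_range_add_two_rpow_neg_le hp N]
  have hs₀ := summable_of_sum_range_le (fun _ => hg _) hnat
  have hs₁ := summable_of_sum_range_le (fun _ => hg _) hneg
  calc ∑ m ∈ T, g m ≤ ∑' m, g m := (hs₀.of_nat_of_neg_add_one hs₁).sum_le_tsum T fun _ _ => hg _
    _ = ∑' n : ℕ, g n + ∑' n : ℕ, g (-(n + 1)) := tsum_of_nat_of_neg_add_one hs₀ hs₁
    _ ≤ (1 + 1 / (p - 1)) + 1 / (p - 1) :=
        add_le_add (tsum_le_of_sum_range_le (fun _ => hg _) hnat)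
          (tsum_le_of_sum_range_le (fun _ => hg _) hneg)
    _ = (p + 1) / (p - 1) := by field_simp [(by linarith : p - 1 ≠ 0)]; ring

theorem sum_prod_le_pow_card {ι α : Type*} [Fintype ι] {g : α → ℝ} {C : ℝ}
    (hg : ∀ m, 0 ≤ g m) (hC : ∀ T : Finset α, ∑ m ∈ T, g m ≤ C) (S : Finset (ι → α)) :
    ∑ k ∈ S, ∏ ℓ, g (k ℓ) ≤ C ^ Fintype.card ι := by
  classical
  calc ∑ k ∈ S, ∏ ℓ, g (k ℓ) ≤ ∑ k ∈ Fintype.piFinset fun ℓ => S.image (· ℓ), ∏ ℓ, g (k ℓ) :=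
        sum_le_sum_of_subset_of_nonneg
          (fun k hk => Fintype.mem_piFinset.2 fun ℓ => mem_image_of_mem _ hk)
          fun _ _ _ => prod_nonneg fun _ _ => hg _
    _ = ∏ ℓ, ∑ m ∈ S.image (· ℓ), g m := (prod_univ_sum _ fun _ => g).symm
    _ ≤ ∏ _ℓ : ι, C := prod_le_prod (fun _ _ => sum_nonneg fun _ _ => hg _) fun _ _ => hC _
    _ = C ^ Fintype.card ι := by rw [prod_const, card_univ]

theorem natCast_mul_rpow_le_of_antitone {ι : Type*} [Fintype ι] (e : ℕ ≃ (ι → ℤ))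
    {σ : ℕ → ℝ} (hσ : ∀ n, σ n = ∏ ℓ, ((1 : ℝ) + |(e n) ℓ|)⁻¹) (hanti : Antitone σ)
    {p : ℝ} (hp : 1 < p) (n : ℕ) :
    n * σ (n - 1) ^ p ≤ ((p + 1) / (p - 1)) ^ Fintype.card ι := by
  have hbase : ∀ m : ℤ, (0 : ℝ) < 1 + |m| := fun m => by positivity
  have hpos : ∀ j, 0 < σ j := fun j => hσ j ▸ prod_pos fun ℓ _ => inv_pos.2 (hbase _)
  have hpow : ∀ j, σ j ^ p = ∏ ℓ, ((1 : ℝ) + |(e j) ℓ|) ^ (-p) := fun j => by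
    rw [hσ, ← finsetProd_rpow _ _ fun ℓ _ => (inv_pos.2 (hbase _)).le]
    exact prod_congr rfl fun ℓ _ => by rw [inv_rpow (hbase _).le, rpow_neg (hbase _).le]
  calc (n : ℝ) * σ (n - 1) ^ p = ∑ _j ∈ range n, σ (n - 1) ^ p := by simp
    _ ≤ ∑ j ∈ range n, σ j ^ p := sum_le_sum fun j hj =>
        rpow_le_rpow (hpos _).le (hanti (by rw [mem_range] at hj; omega)) (by linarith)
    _ = ∑ k ∈ (range n).map e.toEmbedding, ∏ ℓ, ((1 : ℝ) + |k ℓ|) ^ (-p) := by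
        simp only [sum_map, hpow]; rfl
    _ ≤ ((p + 1) / (p - 1)) ^ Fintype.card ι :=
        sum_prod_le_pow_card (fun _ => rpow_nonneg (hbase _).le _)
          (sum_one_add_abs_rpow_neg_le hp) _

theorem le_rpow_neg_inv_mul_of_mul_rpow_le {s x p C : ℝ} (hs : 0 ≤ s) (hx : 0 < x)
    (hp : 1 ≤ p) (hC : 1 ≤ C) (h : x * s ^ p ≤ C) : s ≤ x ^ (-p⁻¹) * C := by
  have hp₀ : 0 < p := by linarith
  calc s = (s ^ p) ^ p⁻¹ := (rpow_rpow_inv hs hp₀.ne').symm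
    _ ≤ (x⁻¹ * C) ^ p⁻¹ := by
        gcongr; rwa [← div_eq_inv_mul, le_div_iff₀' hx]
    _ = x ^ (-p⁻¹) * C ^ p⁻¹ := by
        rw [mul_rpow (by positivity) (by positivity), inv_rpow hx.le, rpow_neg hx.le]
    _ ≤ x ^ (-p⁻¹) * C := by
        gcongr
        exact rpow_le_self_of_one_le hC (inv_le_one_of_one_le₀ hp)

theorem rpow_neg_le_exp_div {x q c : ℝ} (hx : 0 < x) (h : (1 - q) * log x ≤ c) :
    x ^ (-q) ≤ exp c / x := by
  rw [rpow_def_of_pos hx, ← exp_log hx, ← exp_sub, exp_log hx]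
  exact exp_le_exp.2 (by linarith)

/-- The bijection `e` realizes the rearrangement; the paper's `σ_n` is `σ (n - 1)`. -/
theorem stmt15 (d : ℕ) (hd : 1 ≤ d) (σ : ℕ → ℝ) (e : ℕ ≃ (Fin d → ℤ))
    (hσ : ∀ n, σ n = ∏ ℓ, ((1 : ℝ) + |(e n) ℓ|)⁻¹) (hanti : Antitone σ) :
    ∀ n : ℕ, 1 ≤ n → Real.exp ((d : ℝ) / 2) < n →
      σ (n - 1) ≤ (1 / n) * (2 * Real.exp 1 * Real.log n / d) ^ d := by
  intro n hn hexp
  have hd₀ : (0 : ℝ) < d := by exact_mod_cast hd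
  have hn₀ : (0 : ℝ) < n := by exact_mod_cast hn
  have hL : (d : ℝ) / 2 < log n := (lt_log_iff_exp_lt hn₀).2 hexp
  set r := 2 * log n / d with hr_def
  have hr : 1 < r := by rw [hr_def, lt_div_iff₀ hd₀]; linarith
  set p := (r + 1) / (r - 1) with hp_def
  have hp : 1 < p := by rw [hp_def, lt_div_iff₀ (by linarith)]; linarith
  have hpr : (p + 1) / (p - 1) = r := by
    rw [hp_def]; field_simp [(by linarith : r - 1 ≠ 0)]; ring
  have hexponent : (1 - p⁻¹) * log n ≤ d := by
    have hp_inv : 1 - p⁻¹ = 2 / (r + 1) := by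
      rw [hp_def, inv_div]; field_simp [(by linarith : r + 1 ≠ 0)]; ring
    have hdr : (d : ℝ) * r = 2 * log n := by rw [hr_def]; field_simp
    rw [hp_inv, div_mul_eq_mul_div, div_le_iff₀ (by linarith)]
    linarith
  calc σ (n - 1) ≤ (n : ℝ) ^ (-p⁻¹) * r ^ d := by
        refine le_rpow_neg_inv_mul_of_mul_rpow_le ?_ hn₀ hp.le (one_le_pow₀ hr.le) ?_
        · rw [hσ]; positivity
        · simpa [hpr] using natCast_mul_rpow_le_of_antitone e hσ hanti hp n
    _ ≤ exp d / n * r ^ d := by gcongr; exact rpow_neg_le_exp_div hn₀ hexponent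
    _ = (1 / n) * (2 * Real.exp 1 * Real.log n / d) ^ d := by
        rw [hr_def, ← exp_one_pow]; ring
end

section
/- Let $(a_{\ell})_{\ell \in \mathbb{Z}}$ with $a_{\ell} = 1/(1+|\ell|)$ and let $(b_{\ell})_{\ell \in \mathbb{Z}}$ satisfy $0 < b_{\ell} \le b_0 = 1$ for all $\ell \ne 0$ and $\lim_{|\ell| \to \infty} a_{\ell}/b_{\ell} = 1$. For $0 < \varepsilon \le 1$ set $A_d(\varepsilon) = \#\{k \in \mathbb{Z}^d : \prod_{j=1}^d a_{k_j} \ge \varepsilon\}$ and $B_d(\varepsilon) = \#\{k \in \mathbb{Z}^d : \prod_{j=1}^d b_{k_j} \ge \varepsilon\}$. Then $\lim_{\varepsilon \downarrow 0} B_d(\varepsilon)/A_d(\varepsilon) = 1$. -/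
/-!
For `a ℓ = 1 / (1 + |ℓ|)` the level set `{k | ε ≤ ∏ a (k j)}` is the hyperbolic cross
`{k | ∏ (|k j| + 1) ≤ 1/ε}`. Splitting off the first coordinate, its size `N_d(x)` satisfies
`N_{d+1}(x) + N_d(x) = 2 ∑_{m ≤ x} N_d(x/m)`, and comparing this sum with
`∫₁ˣ log (x/t)ᵖ dt/t = (log x)ᵖ⁺¹/(p+1)` gives `N_{d+1}(x) ~ 2ᵈ⁺¹/d! · x (log x)ᵈ` by induction.
Hence `A_d(λε)/A_d(ε) → 1/λ` and `A_{d-1}(λε)/A_d(ε) → 0`.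

Since `a ℓ / b ℓ → 1`, outside a finite set `F` of indices `b ≤ r a` and `a ≤ r b` for any `r > 1`.
The points with no coordinate in `F` compare `B_d(ε)` with `A_d(r^{∓d} ε)`; the points with a
coordinate in `F` number `O(A_{d-1})`, which is negligible. Letting `r → 1` gives the limit.
-/

open Filter

namespace HyperbolicCross

open Finset Real Topology

noncomputable section

lemma hasDerivAt_log_div_pow_succ (p : ℕ) {x t : ℝ} (hx : 0 < x) (ht : 0 < t) :
    HasDerivAt (fun s => -(log (x / s) ^ (p + 1) / (p + 1))) (log (x / t) ^ p / t) t := by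
  have hlog : HasDerivAt (fun s => log (x / s)) (-t⁻¹) t := by
    refine ((hasDerivAt_log ht.ne').const_sub (log x)).congr_of_eventuallyEq ?_
    filter_upwards [lt_mem_nhds ht] with s hs
    exact log_div hx.ne' hs.ne'
  refine (((hlog.fun_pow (p + 1)).div_const ((p : ℝ) + 1)).fun_neg).congr_deriv ?_
  field_simp
  push_cast
  ring

lemma integral_log_div_pow_div (p : ℕ) {x y : ℝ} (hx : 0 < x) (hy : 1 ≤ y) :
    ∫ t in (1 : ℝ)..y, log (x / t) ^ p / t =
      (log x ^ (p + 1) - log (x / y) ^ (p + 1)) / (p + 1) := by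
  have hpos : ∀ t ∈ Set.uIcc 1 y, 0 < t := fun t ht =>
    zero_lt_one.trans_le (Set.uIcc_of_le hy ▸ ht).1
  rw [intervalIntegral.integral_eq_sub_of_hasDerivAt
    (fun t ht => hasDerivAt_log_div_pow_succ p hx (hpos t ht))]
  · simp only [div_one]
    ring
  · refine ContinuousOn.intervalIntegrable fun t ht => ?_
    have := hpos t ht
    exact ((continuousAt_const.div continuousAt_id this.ne').log
      (div_pos hx this).ne' |>.pow p |>.div continuousAt_id this.ne').continuousWithinAt

lemma antitoneOn_log_div_pow_div (p : ℕ) (x : ℝ) :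
    AntitoneOn (fun t => log (x / t) ^ p / t) (Set.Icc 1 x) := by
  intro s hs t ht hst
  have hs0 : 0 < s := zero_lt_one.trans_le hs.1
  have hlog : 0 ≤ log (x / t) := log_nonneg ((one_le_div (by linarith [ht.1])).2 ht.2)
  have hx0 : 0 < x := hs0.trans_le hs.2
  have hlog' : log (x / t) ≤ log (x / s) :=
    log_le_log (div_pos hx0 (hs0.trans_le hst)) (div_le_div_of_nonneg_left hx0.le hs0 hst)
  exact div_le_div₀ (pow_nonneg (hlog.trans hlog') p) (pow_le_pow_left₀ hlog hlog' p) hs0 hst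

lemma sum_range_log_div_pow_div_le (p : ℕ) {x : ℝ} (hx : 1 ≤ x) :
    ∑ i ∈ range ⌊x⌋₊, log (x / (i + 1)) ^ p / (i + 1) ≤ log x ^ p + log x ^ (p + 1) / (p + 1) := by
  obtain ⟨n, hn⟩ : ∃ n, ⌊x⌋₊ = n + 1 := Nat.exists_eq_add_of_le' ((Nat.one_le_floor_iff x).2 hx)
  have hnx : 1 + (n : ℝ) ≤ x := by
    have := Nat.floor_le (zero_le_one.trans hx)
    rw [hn] at this
    push_cast at this
    linarith
  have hint :=
    (antitoneOn_log_div_pow_div p x).mono (Set.Icc_subset_Icc le_rfl hnx) |>.sum_le_integral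
  rw [integral_log_div_pow_div p (by linarith) (by linarith)] at hint
  have hlog : 0 ≤ log (x / (1 + n)) := log_nonneg ((one_le_div (by positivity)).2 hnx)
  rw [hn, sum_range_succ', Nat.cast_zero, zero_add, div_one, div_one, add_comm]
  gcongr
  calc ∑ i ∈ range n, log (x / ((i + 1 : ℕ) + 1)) ^ p / ((i + 1 : ℕ) + 1)
      = ∑ i ∈ range n, log (x / (1 + (i + 1 : ℕ))) ^ p / (1 + (i + 1 : ℕ)) := by
        simp only [add_comm _ (1 : ℝ)]
    _ ≤ (log x ^ (p + 1) - log (x / (1 + n)) ^ (p + 1)) / (p + 1) := hint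
    _ ≤ log x ^ (p + 1) / (p + 1) := by
        gcongr
        linarith [pow_nonneg hlog (p + 1)]

lemma le_sum_range_log_div_pow_div (p : ℕ) {x : ℝ} {M : ℕ} (hM : (M : ℝ) + 1 ≤ x) :
    (log x ^ (p + 1) - log (x / (M + 1)) ^ (p + 1)) / (p + 1) ≤
      ∑ i ∈ range M, log (x / (i + 1)) ^ p / (i + 1) := by
  have hint := (antitoneOn_log_div_pow_div p x).mono
    (Set.Icc_subset_Icc le_rfl (by linarith : 1 + (M : ℝ) ≤ x)) |>.integral_le_sum
  have hM0 : (0 : ℝ) ≤ M := M.cast_nonneg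
  rw [integral_log_div_pow_div p (by linarith) (by linarith)] at hint
  simpa only [add_comm (1 : ℝ)] using hint

lemma cast_add_one_le_of_mem_range_floor {x : ℝ} {i : ℕ} (hi : i ∈ range ⌊x⌋₊) :
    (i : ℝ) + 1 ≤ x := by
  have hx : 0 ≤ x := by
    by_contra hx
    simp [Nat.floor_of_nonpos (not_le.1 hx).le] at hi
  exact_mod_cast (Nat.le_floor_iff hx).1 (mem_range.1 hi)

lemma sum_range_le_of_le {f : ℝ → ℝ} {p : ℕ} {α β : ℝ} (hα : 0 ≤ α) (hβ : 0 ≤ β)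
    (hf : ∀ y, 1 ≤ y → f y ≤ α * (y * log y ^ p) + β) {x : ℝ} (hx : 1 ≤ x) :
    ∑ i ∈ range ⌊x⌋₊, f (x / (i + 1)) ≤
      α * x * (log x ^ p + log x ^ (p + 1) / (p + 1)) + β * x := by
  have hterm : ∀ i ∈ range ⌊x⌋₊,
      f (x / (i + 1)) ≤ α * x * (log (x / (i + 1)) ^ p / (i + 1)) + β := by
    intro i hi
    have hix := cast_add_one_le_of_mem_range_floor hi
    calc f (x / (i + 1)) ≤ α * (x / (i + 1) * log (x / (i + 1)) ^ p) + β :=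
          hf _ ((one_le_div (by positivity)).2 hix)
      _ = α * x * (log (x / (i + 1)) ^ p / (i + 1)) + β := by ring
  calc ∑ i ∈ range ⌊x⌋₊, f (x / (i + 1))
      ≤ ∑ i ∈ range ⌊x⌋₊, (α * x * (log (x / (i + 1)) ^ p / (i + 1)) + β) := sum_le_sum hterm
    _ = α * x * ∑ i ∈ range ⌊x⌋₊, log (x / (i + 1)) ^ p / (i + 1) + ⌊x⌋₊ * β := by
        rw [sum_add_distrib, ← mul_sum, sum_const, card_range, nsmul_eq_mul]
    _ ≤ α * x * (log x ^ p + log x ^ (p + 1) / (p + 1)) + β * x := by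
        rw [mul_comm _ β]
        gcongr
        · exact sum_range_log_div_pow_div_le p hx
        · exact Nat.floor_le (by linarith)

lemma le_sum_range_of_le {f : ℝ → ℝ} {p : ℕ} {α K : ℝ} (hf0 : ∀ y, 0 ≤ f y) (hα : 0 ≤ α)
    (hK : 2 ≤ K) (hf : ∀ y, K ≤ y → α * (y * log y ^ p) ≤ f y) {x : ℝ} (hx : K ≤ x) :
    α * x * ((log x ^ (p + 1) - log K ^ (p + 1)) / (p + 1)) ≤
      ∑ i ∈ range ⌊x⌋₊, f (x / (i + 1)) := by
  set M := ⌊x / K⌋₊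
  have hK0 : 0 < K := by linarith
  have hx0 : 0 < x := by linarith
  have hM : (M : ℝ) ≤ x / K := Nat.floor_le (by positivity)
  have hMx : (M : ℝ) + 1 ≤ x := by
    have : x / K ≤ x / 2 := div_le_div_of_nonneg_left (by linarith) two_pos hK
    linarith
  have hxM : x / (M + 1) ≤ K := by
    rw [div_le_iff₀ (by positivity), ← div_le_iff₀' hK0]
    exact (Nat.lt_floor_add_one _).le
  have hlogM : log (x / (M + 1)) ^ (p + 1) ≤ log K ^ (p + 1) :=
    pow_le_pow_left₀ (log_nonneg ((one_le_div (by positivity)).2 hMx))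
      (log_le_log (by positivity) hxM) _
  calc α * x * ((log x ^ (p + 1) - log K ^ (p + 1)) / (p + 1))
      ≤ α * x * ((log x ^ (p + 1) - log (x / (M + 1)) ^ (p + 1)) / (p + 1)) := by gcongr
    _ ≤ α * x * ∑ i ∈ range M, log (x / (i + 1)) ^ p / (i + 1) := by
        gcongr
        exact le_sum_range_log_div_pow_div p hMx
    _ = ∑ i ∈ range M, α * (x / (i + 1) * log (x / (i + 1)) ^ p) := by
        rw [mul_sum]
        exact sum_congr rfl fun i _ => by ring
    _ ≤ ∑ i ∈ range M, f (x / (i + 1)) := sum_le_sum fun i hi => hf _ <| by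
        have : (i : ℝ) + 1 ≤ M := by exact_mod_cast mem_range.1 hi
        rw [le_div_iff₀ (by positivity), ← le_div_iff₀' hK0]
        linarith
    _ ≤ ∑ i ∈ range ⌊x⌋₊, f (x / (i + 1)) :=
        sum_le_sum_of_subset_of_nonneg (range_subset_range.2 (Nat.floor_le_floor
          (div_le_self (by linarith) (by linarith)))) fun _ _ _ => hf0 _

section Summation

variable {f : ℝ → ℝ} {p : ℕ} {c : ℝ}

lemma eventually_lt_sum_range_div_mul_log_pow (hf0 : ∀ y, 0 ≤ f y) (hc : 0 < c)
    (h : Tendsto (fun x => f x / (x * log x ^ p)) atTop (𝓝 c)) {t : ℝ} (ht : t < c / (p + 1)) :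
    ∀ᶠ x in atTop, t < (∑ i ∈ range ⌊x⌋₊, f (x / (i + 1))) / (x * log x ^ (p + 1)) := by
  have hp : (0 : ℝ) < p + 1 := by positivity
  obtain ⟨α, htα, hαc⟩ := exists_between (max_lt ((lt_div_iff₀ hp).1 ht) hc)
  have hα : 0 < α := (le_max_right _ _).trans_lt htα
  obtain ⟨K, hK⟩ := eventually_atTop.1
    ((h.eventually (lt_mem_nhds hαc)).and (eventually_gt_atTop 1))
  have hfK : ∀ y, max K 2 ≤ y → α * (y * log y ^ p) ≤ f y := fun y hy => by
    obtain ⟨hy', hy1⟩ := hK y (le_of_max_le_left hy)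
    have : 0 < log y := log_pos hy1
    exact ((lt_div_iff₀ (by positivity)).1 hy').le
  have hlim : Tendsto (fun x => α * (1 - log (max K 2) ^ (p + 1) / log x ^ (p + 1)) / (p + 1))
      atTop (𝓝 (α / (p + 1))) := by
    simpa using ((tendsto_const_nhds.div_atTop ((tendsto_pow_atTop (Nat.succ_ne_zero p)).comp
      tendsto_log_atTop)).const_sub 1).const_mul α |>.div_const ((p : ℝ) + 1)
  have htα' : t < α / (p + 1) := by
    rw [lt_div_iff₀ hp]
    exact (le_max_left _ _).trans_lt htα
  filter_upwards [hlim.eventually (lt_mem_nhds htα'), eventually_ge_atTop (max K 2),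
    eventually_gt_atTop 1] with x hxt hxK hx1
  have : 0 < log x := log_pos hx1
  refine hxt.trans_le ((le_div_iff₀ (by positivity)).2 ?_)
  calc α * (1 - log (max K 2) ^ (p + 1) / log x ^ (p + 1)) / (p + 1) * (x * log x ^ (p + 1))
      = α * x * ((log x ^ (p + 1) - log (max K 2) ^ (p + 1)) / (p + 1)) := by
        field_simp
    _ ≤ _ := le_sum_range_of_le hf0 hα.le (le_max_right _ _) hfK hxK

lemma eventually_sum_range_div_mul_log_pow_lt (hf0 : ∀ y, 0 ≤ f y) (hf : Monotone f)
    (hc : 0 ≤ c) (h : Tendsto (fun x => f x / (x * log x ^ p)) atTop (𝓝 c)) {t : ℝ}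
    (ht : c / (p + 1) < t) :
    ∀ᶠ x in atTop, (∑ i ∈ range ⌊x⌋₊, f (x / (i + 1))) / (x * log x ^ (p + 1)) < t := by
  have hp : (0 : ℝ) < p + 1 := by positivity
  obtain ⟨α, hcα, hαt⟩ := exists_between ((div_lt_iff₀ hp).1 ht)
  obtain ⟨K, hK⟩ := eventually_atTop.1
    ((h.eventually (gt_mem_nhds hcα)).and (eventually_gt_atTop 1))
  have hα : 0 < α := hc.trans_lt hcα
  have hfK : ∀ y, 1 ≤ y → f y ≤ α * (y * log y ^ p) + f (max K 1) := fun y hy => by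
    have : 0 ≤ α * (y * log y ^ p) := by
      have := log_nonneg hy
      positivity
    rcases le_total (max K 1) y with hKy | hyK
    · obtain ⟨hy', hy1⟩ := hK y (le_of_max_le_left hKy)
      have : 0 < log y := log_pos hy1
      linarith [(div_lt_iff₀ (by positivity)).1 hy', hf0 (max K 1)]
    · linarith [hf hyK]
  have hlim : Tendsto
      (fun x => α * ((log x)⁻¹ + ((p : ℝ) + 1)⁻¹) + f (max K 1) / log x ^ (p + 1))
      atTop (𝓝 (α / (p + 1))) := by
    simpa [div_eq_mul_inv] using
      (((tendsto_inv_atTop_zero.comp tendsto_log_atTop).add_const _).const_mul α).add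
        (tendsto_const_nhds.div_atTop
          ((tendsto_pow_atTop (Nat.succ_ne_zero p)).comp tendsto_log_atTop))
  have hαt' : α / (p + 1) < t := by rwa [div_lt_iff₀ hp]
  filter_upwards [hlim.eventually (gt_mem_nhds hαt'), eventually_gt_atTop 1] with x hxt hx1
  have : 0 < log x := log_pos hx1
  refine lt_of_le_of_lt ((div_le_iff₀ (by positivity)).2 ?_) hxt
  calc ∑ i ∈ range ⌊x⌋₊, f (x / (i + 1))
      ≤ α * x * (log x ^ p + log x ^ (p + 1) / (p + 1)) + f (max K 1) * x :=
        sum_range_le_of_le hα.le (hf0 _) hfK hx1.le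
    _ = _ := by
        field_simp
        ring

theorem tendsto_sum_range_div_mul_log_pow (hf0 : ∀ y, 0 ≤ f y) (hf : Monotone f) (hc : 0 < c)
    (h : Tendsto (fun x => f x / (x * log x ^ p)) atTop (𝓝 c)) :
    Tendsto (fun x => (∑ i ∈ range ⌊x⌋₊, f (x / (i + 1))) / (x * log x ^ (p + 1))) atTop
      (𝓝 (c / (p + 1))) :=
  tendsto_order.2 ⟨fun _ ht => eventually_lt_sum_range_div_mul_log_pow hf0 hc h ht,
    fun _ ht => eventually_sum_range_div_mul_log_pow_lt hf0 hf hc.le h ht⟩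

end Summation

/-- The box `[-n, n]ᵈ` contains all these points and only serves to make the set a `Finset`. -/
def hyperbolicCross (d n : ℕ) : Finset (Fin d → ℤ) :=
  (Fintype.piFinset fun _ => Icc (-(n : ℤ)) n).filter fun k => ∏ j, ((k j).natAbs + 1) ≤ n

def hyperbolicCount (d n : ℕ) : ℕ := (hyperbolicCross d n).card

lemma natAbs_add_one_le_prod {d : ℕ} (k : Fin d → ℤ) (j : Fin d) :
    (k j).natAbs + 1 ≤ ∏ i, ((k i).natAbs + 1) :=
  single_le_prod' (f := fun i => (k i).natAbs + 1) (fun _ _ => Nat.le_add_left 1 _) (mem_univ j)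

lemma mem_hyperbolicCross {d n : ℕ} {k : Fin d → ℤ} :
    k ∈ hyperbolicCross d n ↔ ∏ j, ((k j).natAbs + 1) ≤ n := by
  refine ⟨fun h => (mem_filter.1 h).2,
    fun h => mem_filter.2 ⟨Fintype.mem_piFinset.2 fun j => ?_, h⟩⟩
  have := (natAbs_add_one_le_prod k j).trans h
  rw [mem_Icc]
  omega

lemma hyperbolicCount_mono (d : ℕ) : Monotone (hyperbolicCount d) := fun _ _ h =>
  card_le_card fun _ hk => mem_hyperbolicCross.2 ((mem_hyperbolicCross.1 hk).trans h)

lemma hyperbolicCount_pos (d : ℕ) {n : ℕ} (hn : 1 ≤ n) : 0 < hyperbolicCount d n :=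
  card_pos.2 ⟨0, mem_hyperbolicCross.2 (by simpa using hn)⟩

lemma hyperbolicCount_zero_right (d : ℕ) : hyperbolicCount d 0 = 0 :=
  card_eq_zero.2 <| eq_empty_of_forall_notMem fun k hk =>
    (prod_pos fun j _ => Nat.succ_pos (k j).natAbs).ne' (Nat.le_zero.1 (mem_hyperbolicCross.1 hk))

lemma hyperbolicCount_zero_left {n : ℕ} (hn : 1 ≤ n) : hyperbolicCount 0 n = 1 :=
  (card_le_one.2 fun _ _ _ _ => Subsingleton.elim _ _).antisymm (hyperbolicCount_pos 0 hn)

lemma hyperbolicCross_succ (d n : ℕ) :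
    hyperbolicCross (d + 1) n = (Icc (-(n : ℤ)) n).biUnion
      fun ℓ => (hyperbolicCross d (n / (ℓ.natAbs + 1))).image (Fin.cons ℓ) := by
  ext k
  simp only [mem_biUnion, mem_image, mem_hyperbolicCross, mem_Icc,
    Nat.le_div_iff_mul_le (Nat.succ_pos _)]
  constructor
  · intro h
    have hk := (natAbs_add_one_le_prod k 0).trans h
    refine ⟨k 0, by omega, Fin.tail k, ?_, Fin.cons_self_tail k⟩
    rw [Fin.prod_univ_succ, mul_comm] at h
    exact h
  · rintro ⟨ℓ, -, v, hv, rfl⟩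
    rw [Fin.prod_univ_succ, mul_comm]
    simpa using hv

lemma hyperbolicCount_succ (d n : ℕ) :
    hyperbolicCount (d + 1) n = ∑ ℓ ∈ Icc (-(n : ℤ)) n, hyperbolicCount d (n / (ℓ.natAbs + 1)) := by
  rw [hyperbolicCount, hyperbolicCross_succ, card_biUnion]
  · exact sum_congr rfl fun ℓ _ =>
      card_image_of_injective _ (Fin.cons_right_injective (α := fun _ => ℤ) ℓ)
  · intro ℓ _ ℓ' _ hne
    simp only [Function.onFun, disjoint_left, mem_image]
    rintro _ ⟨u, -, rfl⟩ ⟨v, -, hv⟩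
    have h0 := congrFun hv 0
    simp only [Fin.cons_zero] at h0
    exact hne h0.symm

lemma sum_Icc_neg_natAbs {M : Type*} [AddCommMonoid M] (g : ℕ → M) (n : ℕ) :
    ∑ ℓ ∈ Icc (-(n : ℤ)) n, g ℓ.natAbs + g 0 = 2 • ∑ i ∈ range (n + 1), g i := by
  induction n with
  | zero => simp [two_nsmul]
  | succ n ih =>
    have hIcc : Icc (-((n + 1 : ℕ) : ℤ)) (n + 1 : ℕ) =
        insert (-((n + 1 : ℕ) : ℤ)) (insert ((n + 1 : ℕ) : ℤ) (Icc (-(n : ℤ)) n)) := by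
      ext ℓ
      simp only [mem_insert, mem_Icc]
      omega
    rw [hIcc, sum_insert (by simp only [mem_insert, mem_Icc]; omega),
      sum_insert (by simp only [mem_Icc]; omega), sum_range_succ, nsmul_add, ← ih]
    simp only [Int.natAbs_neg, Int.natAbs_natCast, two_nsmul]
    abel

lemma hyperbolicCount_succ_add (d n : ℕ) :
    hyperbolicCount (d + 1) n + hyperbolicCount d n =
      2 * ∑ i ∈ range n, hyperbolicCount d (n / (i + 1)) := by
  have h := sum_Icc_neg_natAbs (fun i => hyperbolicCount d (n / (i + 1))) n
  rw [sum_range_succ, Nat.div_eq_of_lt (Nat.lt_succ_self n), hyperbolicCount_zero_right,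
    add_zero, Nat.div_one, smul_eq_mul] at h
  rw [hyperbolicCount_succ, ← h]

lemma hyperbolicCount_one {n : ℕ} (hn : 1 ≤ n) : hyperbolicCount 1 n = 2 * n - 1 := by
  have h : hyperbolicCount 1 n + _ = _ := hyperbolicCount_succ_add 0 n
  rw [hyperbolicCount_zero_left hn, sum_congr rfl fun i hi => hyperbolicCount_zero_left
    ((Nat.one_le_div_iff (Nat.succ_pos i)).2 (mem_range.1 hi)), sum_const, card_range,
    smul_eq_mul, mul_one] at h
  omega

lemma hyperbolicCount_succ_floor (d : ℕ) (x : ℝ) :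
    (hyperbolicCount (d + 1) ⌊x⌋₊ : ℝ) =
      2 * ∑ i ∈ range ⌊x⌋₊, (hyperbolicCount d ⌊x / (i + 1)⌋₊ : ℝ) - hyperbolicCount d ⌊x⌋₊ := by
  have hfloor : ∀ i : ℕ, ⌊x / ((i : ℝ) + 1)⌋₊ = ⌊x⌋₊ / (i + 1) := fun i => by
    exact_mod_cast Nat.floor_div_natCast x (i + 1)
  simp only [hfloor, eq_sub_iff_add_eq]
  exact_mod_cast hyperbolicCount_succ_add d ⌊x⌋₊

theorem tendsto_hyperbolicCount_succ_div_mul_log_pow (d : ℕ) :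
    Tendsto (fun x => (hyperbolicCount (d + 1) ⌊x⌋₊ : ℝ) / (x * log x ^ d)) atTop
      (𝓝 (2 ^ (d + 1) / d.factorial)) := by
  induction d with
  | zero =>
    have h := (tendsto_nat_floor_div_atTop.const_mul 2).sub (tendsto_inv_atTop_zero (𝕜 := ℝ))
    rw [mul_one, sub_zero] at h
    simp only [zero_add, pow_one, pow_zero, mul_one, Nat.factorial_zero, Nat.cast_one, div_one]
    refine h.congr' ?_
    filter_upwards [eventually_ge_atTop 1] with x hx
    have hfl : 1 ≤ ⌊x⌋₊ := (Nat.one_le_floor_iff x).2 hx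
    rw [hyperbolicCount_one hfl, Nat.cast_sub (by omega)]
    field_simp
    push_cast
    ring
  | succ d ih =>
    have hS := tendsto_sum_range_div_mul_log_pow (fun _ => Nat.cast_nonneg _)
      (fun _ _ h => Nat.cast_le.2 (hyperbolicCount_mono _ (Nat.floor_le_floor h)))
      (by positivity) ih
    have h := (hS.const_mul 2).sub (ih.mul (tendsto_inv_atTop_zero.comp tendsto_log_atTop))
    convert h.congr' ?_ using 2
    · rw [Nat.factorial_succ]
      push_cast
      field_simp
      ring
    · filter_upwards [eventually_gt_atTop 1] with x hx
      have : 0 < log x := log_pos hx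
      rw [hyperbolicCount_succ_floor (d + 1) x, Function.comp_apply]
      field_simp
      ring

lemma hyperbolicCount_floor_pos (d : ℕ) {x : ℝ} (hx : 1 ≤ x) :
    0 < (hyperbolicCount d ⌊x⌋₊ : ℝ) :=
  Nat.cast_pos.2 (hyperbolicCount_pos d ((Nat.one_le_floor_iff x).2 hx))

lemma tendsto_log_div_const_div_log {s : ℝ} (hs : 0 < s) :
    Tendsto (fun x => log (x / s) / log x) atTop (𝓝 1) := by
  have h := ((tendsto_inv_atTop_zero.comp tendsto_log_atTop).const_mul (log s)).const_sub 1
  rw [mul_zero, sub_zero] at h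
  refine h.congr' ?_
  filter_upwards [eventually_gt_atTop 1] with x hx
  have : 0 < log x := log_pos hx
  rw [Function.comp_apply, log_div (by linarith) hs.ne']
  field_simp

lemma tendsto_hyperbolicCount_div_const_div (d : ℕ) {s : ℝ} (hs : 0 < s) :
    Tendsto (fun x => (hyperbolicCount (d + 1) ⌊x / s⌋₊ : ℝ) / hyperbolicCount (d + 1) ⌊x⌋₊)
      atTop (𝓝 s⁻¹) := by
  have hc : (0 : ℝ) < 2 ^ (d + 1) / d.factorial := by positivity
  have hN := tendsto_hyperbolicCount_succ_div_mul_log_pow d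
  have h := ((hN.comp (tendsto_id.atTop_div_const hs)).div hN hc.ne').mul
    ((tendsto_log_div_const_div_log hs).pow d |>.const_mul s⁻¹)
  rw [div_self hc.ne', one_pow, mul_one, one_mul] at h
  refine h.congr' ?_
  filter_upwards [eventually_gt_atTop 1, eventually_gt_atTop s] with x hx hxs
  have := hyperbolicCount_floor_pos (d + 1) hx.le
  have : 0 < log x := log_pos hx
  have : 0 < log (x / s) := log_pos ((one_lt_div hs).2 hxs)
  simp only [Pi.div_apply, Function.comp_apply, id, div_pow]
  field_simp

lemma tendsto_hyperbolicCount_div_mul_log_pow (d : ℕ) :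
    Tendsto (fun x => (hyperbolicCount d ⌊x⌋₊ : ℝ) / (x * log x ^ d)) atTop (𝓝 0) := by
  cases d with
  | zero =>
    refine tendsto_inv_atTop_zero.congr' ?_
    filter_upwards [eventually_ge_atTop 1] with x hx
    rw [hyperbolicCount_zero_left ((Nat.one_le_floor_iff x).2 hx)]
    simp
  | succ d =>
    have h := (tendsto_hyperbolicCount_succ_div_mul_log_pow d).mul
      (tendsto_inv_atTop_zero.comp tendsto_log_atTop)
    rw [mul_zero] at h
    refine h.congr' ?_
    filter_upwards [eventually_gt_atTop 1] with x hx
    have : 0 < log x := log_pos hx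
    rw [Function.comp_apply, pow_succ]
    field_simp

lemma tendsto_hyperbolicCount_div_hyperbolicCount_succ (d : ℕ) {s : ℝ} (hs : 0 < s) :
    Tendsto (fun x => (hyperbolicCount d ⌊x / s⌋₊ : ℝ) / hyperbolicCount (d + 1) ⌊x⌋₊)
      atTop (𝓝 0) := by
  have hc : (0 : ℝ) < 2 ^ (d + 1) / d.factorial := by positivity
  have h := (tendsto_hyperbolicCount_div_mul_log_pow d).div
    (tendsto_hyperbolicCount_succ_div_mul_log_pow d) hc.ne'
  rw [zero_div] at h
  have hratio : Tendsto (fun x : ℝ => (hyperbolicCount d ⌊x⌋₊ : ℝ) / hyperbolicCount (d + 1) ⌊x⌋₊)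
      atTop (𝓝 0) := by
    refine h.congr' ?_
    filter_upwards [eventually_gt_atTop 1] with x hx
    have := hyperbolicCount_floor_pos (d + 1) hx.le
    have : 0 < log x := log_pos hx
    simp only [Pi.div_apply]
    field_simp
  cases d with
  | zero =>
    refine hratio.congr' ?_
    filter_upwards [eventually_ge_atTop s, eventually_ge_atTop (1 : ℝ)] with x hxs hx
    rw [hyperbolicCount_zero_left ((Nat.one_le_floor_iff _).2 ((one_le_div hs).2 hxs)),
      hyperbolicCount_zero_left ((Nat.one_le_floor_iff x).2 hx)]
  | succ d =>
    have h := (tendsto_hyperbolicCount_div_const_div d hs).mul hratio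
    rw [mul_zero] at h
    refine h.congr' ?_
    filter_upwards [eventually_ge_atTop (1 : ℝ)] with x hx
    have := hyperbolicCount_floor_pos (d + 1) hx
    have := hyperbolicCount_floor_pos (d + 2) hx
    field_simp

def weight (ℓ : ℤ) : ℝ := 1 / (1 + |(ℓ : ℝ)|)

lemma weight_pos (ℓ : ℤ) : 0 < weight ℓ := by
  unfold weight
  positivity

lemma weight_le_one (ℓ : ℤ) : weight ℓ ≤ 1 :=
  div_le_one_of_le₀ (le_add_of_nonneg_right (abs_nonneg _)) (by positivity)

def levelSet (v : ℤ → ℝ) (d : ℕ) (ε : ℝ) : Set (Fin d → ℤ) := {k | ε ≤ ∏ j, v (k j)}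

lemma levelSet_weight (d : ℕ) {ε : ℝ} (hε : 0 < ε) :
    levelSet weight d ε = hyperbolicCross d ⌊ε⁻¹⌋₊ := by
  ext k
  have hprod : ∏ j, weight (k j) = ((∏ j, ((k j).natAbs + 1) : ℕ) : ℝ)⁻¹ := by
    rw [Nat.cast_prod, ← prod_inv_distrib]
    refine prod_congr rfl fun j _ => ?_
    rw [weight, one_div, add_comm, Nat.cast_add_one, Nat.cast_natAbs, Int.cast_abs]
  rw [levelSet, Set.mem_ofPred_eq, mem_coe, mem_hyperbolicCross, hprod,
    Nat.le_floor_iff (by positivity), le_inv_comm₀ hε (by positivity)]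

lemma finite_levelSet_weight (d : ℕ) (ε : ℝ) (hε : 0 < ε) : (levelSet weight d ε).Finite :=
  levelSet_weight d hε ▸ finite_toSet _

lemma ncard_levelSet_weight (d : ℕ) {ε : ℝ} (hε : 0 < ε) :
    (levelSet weight d ε).ncard = hyperbolicCount d ⌊ε⁻¹⌋₊ := by
  rw [levelSet_weight d hε, Set.ncard_coe_finset, hyperbolicCount]

lemma tendsto_ncard_levelSet_weight_div {d d' : ℕ} {s L : ℝ} (hs : 0 < s)
    (h : Tendsto (fun x => (hyperbolicCount d ⌊x / s⌋₊ : ℝ) / hyperbolicCount d' ⌊x⌋₊)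
      atTop (𝓝 L)) :
    Tendsto (fun ε => ((levelSet weight d (s * ε)).ncard : ℝ) / (levelSet weight d' ε).ncard)
      (𝓝[>] 0) (𝓝 L) := by
  refine (h.comp tendsto_inv_nhdsGT_zero).congr' ?_
  filter_upwards [self_mem_nhdsWithin] with ε (hε : 0 < ε)
  rw [Function.comp_apply, ncard_levelSet_weight d (by positivity), ncard_levelSet_weight d' hε,
    mul_inv_rev, ← div_eq_mul_inv]

section Comparison

variable {u v : ℤ → ℝ} {C : ℝ}

lemma mem_levelSet_of_le_mul (hC : 0 < C) {d : ℕ} {ε : ℝ} {k : Fin d → ℤ}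
    (hk : k ∈ levelSet v d ε) (hv : ∀ j, 0 ≤ v (k j)) (hvu : ∀ j, v (k j) ≤ C * u (k j)) :
    k ∈ levelSet u d ((C ^ d)⁻¹ * ε) := by
  have : ∏ j, v (k j) ≤ C ^ d * ∏ j, u (k j) :=
    calc ∏ j, v (k j) ≤ ∏ j, (C * u (k j)) := prod_le_prod (fun j _ => hv j) fun j _ => hvu j
      _ = C ^ d * ∏ j, u (k j) := by
          rw [prod_mul_distrib, prod_const, card_univ, Fintype.card_fin]
  rw [levelSet, Set.mem_ofPred_eq, inv_mul_le_iff₀ (by positivity)]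
  exact hk.trans this

lemma levelSet_subset_of_le_mul (hC : 0 < C) (hv : ∀ ℓ, 0 ≤ v ℓ) (hvu : ∀ ℓ, v ℓ ≤ C * u ℓ)
    (d : ℕ) (ε : ℝ) : levelSet v d ε ⊆ levelSet u d ((C ^ d)⁻¹ * ε) :=
  fun _ hk => mem_levelSet_of_le_mul hC hk (fun _ => hv _) fun _ => hvu _

lemma finite_levelSet_of_le_mul (hC : 0 < C) (hv : ∀ ℓ, 0 ≤ v ℓ) (hvu : ∀ ℓ, v ℓ ≤ C * u ℓ)
    (hu : ∀ d ε, 0 < ε → (levelSet u d ε).Finite) (d : ℕ) (ε : ℝ) (hε : 0 < ε) :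
    (levelSet v d ε).Finite :=
  (hu d _ (by positivity)).subset (levelSet_subset_of_le_mul hC hv hvu d ε)

lemma ncard_levelSet_sep_mem_le (hv0 : ∀ ℓ, 0 ≤ v ℓ) (hv1 : ∀ ℓ, v ℓ ≤ 1) {F : Set ℤ}
    (hF : F.Finite) {d : ℕ} {ε : ℝ} (hfin : (levelSet v d ε).Finite) (j : Fin (d + 1)) :
    {k ∈ levelSet v (d + 1) ε | k j ∈ F}.ncard ≤ F.ncard * (levelSet v d ε).ncard := by
  rw [← Set.ncard_prod]
  refine Set.ncard_le_ncard_of_injOn (fun k => (k j, j.removeNth k)) ?_ ?_ (hF.prod hfin)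
  · rintro k ⟨hk, hkF⟩
    refine ⟨hkF, ?_⟩
    calc ε ≤ ∏ i, v (k i) := hk
      _ = v (k j) * ∏ i, v (k (j.succAbove i)) := Fin.prod_univ_succAbove _ j
      _ ≤ ∏ i, v (k (j.succAbove i)) :=
          mul_le_of_le_one_left (prod_nonneg fun _ _ => hv0 _) (hv1 _)
  · intro k _ k' _ h
    simp only [Prod.mk.injEq] at h
    rw [← Fin.insertNth_self_removeNth j k, ← Fin.insertNth_self_removeNth j k', h.1, h.2]

/-- `m` is `(d + 1)` times the size of the finite set where `v ≤ C u` fails: a point with a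
coordinate there is determined by that coordinate and a point of the `d`-dimensional level set. -/
theorem exists_ncard_levelSet_succ_le (hC : 0 < C) (hv0 : ∀ ℓ, 0 ≤ v ℓ) (hv1 : ∀ ℓ, v ℓ ≤ 1)
    (hvu : ∀ᶠ ℓ in cofinite, v ℓ ≤ C * u ℓ) (hu : ∀ d ε, 0 < ε → (levelSet u d ε).Finite)
    (hv : ∀ d ε, 0 < ε → (levelSet v d ε).Finite) (d : ℕ) :
    ∃ m : ℕ, ∀ ε, 0 < ε → (levelSet v (d + 1) ε).ncard ≤
      (levelSet u (d + 1) ((C ^ (d + 1))⁻¹ * ε)).ncard + m * (levelSet v d ε).ncard := by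
  set F := {ℓ | ¬ v ℓ ≤ C * u ℓ}
  have hF : F.Finite := eventually_cofinite.1 hvu
  refine ⟨(d + 1) * F.ncard, fun ε hε => ?_⟩
  set U := levelSet u (d + 1) ((C ^ (d + 1))⁻¹ * ε)
  set T := fun j : Fin (d + 1) => {k ∈ levelSet v (d + 1) ε | k j ∈ F}
  have hcover : levelSet v (d + 1) ε ⊆ U ∪ ⋃ j, T j := by
    intro k hk
    by_cases hkF : ∃ j, k j ∈ F
    · obtain ⟨j, hj⟩ := hkF
      exact Or.inr (Set.mem_iUnion.2 ⟨j, hk, hj⟩)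
    · push Not at hkF
      exact Or.inl (mem_levelSet_of_le_mul hC hk (fun _ => hv0 _) fun j => not_not.1 (hkF j))
  have hfin : (U ∪ ⋃ j, T j).Finite :=
    (hu _ _ (by positivity)).union
      (Set.finite_iUnion fun _ => (hv _ _ hε).subset (Set.sep_subset _ _))
  calc (levelSet v (d + 1) ε).ncard
      ≤ (U ∪ ⋃ j, T j).ncard := Set.ncard_le_ncard hcover hfin
    _ ≤ U.ncard + ∑ j, (T j).ncard :=
        (Set.ncard_union_le _ _).trans (Nat.add_le_add_left (Set.ncard_iUnion_le_of_fintype T) _)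
    _ ≤ U.ncard + ∑ _j : Fin (d + 1), F.ncard * (levelSet v d ε).ncard := by
        gcongr with j
        exact ncard_levelSet_sep_mem_le hv0 hv1 hF (hv d ε hε) j
    _ = _ := by rw [sum_const, card_univ, Fintype.card_fin, smul_eq_mul, mul_assoc]

end Comparison

lemma eventually_ncard_levelSet_div_lt {b : ℤ → ℝ} (hb0 : ∀ ℓ, 0 ≤ b ℓ) (hb1 : ∀ ℓ, b ℓ ≤ 1)
    {C r : ℝ} (hC : 0 < C) (hbC : ∀ ℓ, b ℓ ≤ C * weight ℓ) (hr : 0 < r)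
    (hbr : ∀ᶠ ℓ in cofinite, b ℓ ≤ r * weight ℓ) (d : ℕ) {t : ℝ} (ht : r ^ (d + 1) < t) :
    ∀ᶠ ε in 𝓝[>] 0,
      ((levelSet b (d + 1) ε).ncard : ℝ) / (levelSet weight (d + 1) ε).ncard < t := by
  obtain ⟨m, hm⟩ := exists_ncard_levelSet_succ_le hr hb0 hb1 hbr finite_levelSet_weight
    (finite_levelSet_of_le_mul hC hb0 hbC finite_levelSet_weight) d
  have hlim := (tendsto_ncard_levelSet_weight_div (by positivity)
    (tendsto_hyperbolicCount_div_const_div d (s := (r ^ (d + 1))⁻¹) (by positivity))).add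
    ((tendsto_ncard_levelSet_weight_div (by positivity)
      (tendsto_hyperbolicCount_div_hyperbolicCount_succ d (s := (C ^ d)⁻¹) (by positivity))
        ).const_mul (m : ℝ))
  rw [inv_inv, mul_zero, add_zero] at hlim
  filter_upwards [hlim.eventually (gt_mem_nhds ht), self_mem_nhdsWithin] with ε hlt (hε : 0 < ε)
  set A := ((levelSet weight (d + 1) ε).ncard : ℝ)
  have hB : ((levelSet b (d + 1) ε).ncard : ℝ) ≤
      (levelSet weight (d + 1) ((r ^ (d + 1))⁻¹ * ε)).ncard +
        m * (levelSet weight d ((C ^ d)⁻¹ * ε)).ncard := by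
    have := Set.ncard_le_ncard (levelSet_subset_of_le_mul hC hb0 hbC d ε)
      (finite_levelSet_weight _ _ (by positivity))
    exact_mod_cast (hm ε hε).trans (by gcongr)
  calc ((levelSet b (d + 1) ε).ncard : ℝ) / A
      ≤ ((levelSet weight (d + 1) ((r ^ (d + 1))⁻¹ * ε)).ncard +
          m * (levelSet weight d ((C ^ d)⁻¹ * ε)).ncard) / A :=
        div_le_div_of_nonneg_right hB (Nat.cast_nonneg _)
    _ = _ := by ring
    _ < t := hlt

lemma eventually_lt_ncard_levelSet_div {b : ℤ → ℝ}
    (hb : ∀ d ε, 0 < ε → (levelSet b d ε).Finite) {r : ℝ} (hr : 0 < r)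
    (hwr : ∀ᶠ ℓ in cofinite, weight ℓ ≤ r * b ℓ) (d : ℕ) {t : ℝ} (ht : t < (r ^ (d + 1))⁻¹) :
    ∀ᶠ ε in 𝓝[>] 0,
      t < ((levelSet b (d + 1) ε).ncard : ℝ) / (levelSet weight (d + 1) ε).ncard := by
  obtain ⟨m, hm⟩ := exists_ncard_levelSet_succ_le hr (fun ℓ => (weight_pos ℓ).le) weight_le_one
    hwr hb finite_levelSet_weight d
  have hlim := (tendsto_ncard_levelSet_weight_div (by positivity)
    (tendsto_hyperbolicCount_div_const_div d (s := r ^ (d + 1)) (by positivity))).sub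
    ((tendsto_ncard_levelSet_weight_div (by positivity)
      (tendsto_hyperbolicCount_div_hyperbolicCount_succ d (s := r ^ (d + 1)) (by positivity))
        ).const_mul (m : ℝ))
  rw [mul_zero, sub_zero] at hlim
  filter_upwards [hlim.eventually (lt_mem_nhds ht), self_mem_nhdsWithin] with ε hlt (hε : 0 < ε)
  set A := ((levelSet weight (d + 1) ε).ncard : ℝ)
  have hB : ((levelSet weight (d + 1) (r ^ (d + 1) * ε)).ncard : ℝ) -
      m * (levelSet weight d (r ^ (d + 1) * ε)).ncard ≤ (levelSet b (d + 1) ε).ncard := by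
    have := hm (r ^ (d + 1) * ε) (by positivity)
    rw [← mul_assoc, inv_mul_cancel₀ (by positivity), one_mul] at this
    rw [sub_le_iff_le_add]
    exact_mod_cast this
  calc t < _ := hlt
    _ = (((levelSet weight (d + 1) (r ^ (d + 1) * ε)).ncard : ℝ) -
          m * (levelSet weight d (r ^ (d + 1) * ε)).ncard) / A := by ring
    _ ≤ ((levelSet b (d + 1) ε).ncard : ℝ) / A := div_le_div_of_nonneg_right hB (Nat.cast_nonneg _)

lemma exists_forall_le_mul_of_tendsto_div {ι : Type*} {u v : ι → ℝ} {c : ℝ} (hv : ∀ i, 0 < v i)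
    (h : Tendsto (fun i => u i / v i) cofinite (𝓝 c)) : ∃ C, 0 < C ∧ ∀ i, u i ≤ C * v i := by
  obtain ⟨C, hC⟩ := h.bddAbove_range_of_cofinite
  refine ⟨max C 1, by positivity, fun i => ?_⟩
  rw [← div_le_iff₀ (hv i)]
  exact (hC ⟨i, rfl⟩).trans (le_max_left _ _)

lemma eventually_le_mul_of_tendsto_div {ι : Type*} {l : Filter ι} {u v : ι → ℝ}
    (hv : ∀ i, 0 < v i) (h : Tendsto (fun i => u i / v i) l (𝓝 1)) {r : ℝ} (hr : 1 < r) :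
    ∀ᶠ i in l, u i ≤ r * v i :=
  (h.eventually (gt_mem_nhds hr)).mono fun i hi => (div_le_iff₀ (hv i)).1 hi.le

end

end HyperbolicCross

open HyperbolicCross in
theorem stmt19 (d : ℕ) (hd : 1 ≤ d) (a b : ℤ → ℝ)
    (ha : ∀ ℓ : ℤ, a ℓ = 1 / (1 + |(ℓ : ℝ)|))
    (hb0 : b 0 = 1) (hbpos : ∀ ℓ : ℤ, 0 < b ℓ) (hble : ∀ ℓ : ℤ, ℓ ≠ 0 → b ℓ ≤ 1)
    (hlim : Tendsto (fun ℓ : ℤ => a ℓ / b ℓ) cofinite (nhds 1)) :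
    Tendsto
      (fun ε : ℝ =>
        ((Set.ncard {k : Fin d → ℤ | ε ≤ ∏ j, b (k j)} : ℝ) /
          (Set.ncard {k : Fin d → ℤ | ε ≤ ∏ j, a (k j)} : ℝ)))
      (nhdsWithin 0 (Set.Ioi 0)) (nhds 1) := by
  obtain ⟨d, rfl⟩ : ∃ e, d = e + 1 := ⟨d - 1, by omega⟩
  obtain rfl : a = weight := funext ha
  have hb_nonneg : ∀ ℓ, 0 ≤ b ℓ := fun ℓ => (hbpos ℓ).le
  have hb_le_one : ∀ ℓ, b ℓ ≤ 1 := fun ℓ => (eq_or_ne ℓ 0).elim (fun h => h ▸ hb0.le) (hble ℓ)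
  have hlim' : Tendsto (fun ℓ => b ℓ / weight ℓ) cofinite (nhds 1) := by
    simpa using hlim.inv₀ one_ne_zero
  obtain ⟨C, hC, hbC⟩ := exists_forall_le_mul_of_tendsto_div weight_pos hlim'
  have hpow : Tendsto (fun r : ℝ => r ^ (d + 1)) (nhdsWithin 1 (Set.Ioi 1)) (nhds 1) := by
    simpa using ((continuous_pow (M := ℝ) (d + 1)).tendsto 1).mono_left nhdsWithin_le_nhds
  refine tendsto_order.2 ⟨fun t ht => ?_, fun t ht => ?_⟩
  · obtain ⟨r, htr, hr⟩ := (((hpow.inv₀ one_ne_zero).eventually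
      (lt_mem_nhds (by simpa using ht))).and self_mem_nhdsWithin).exists
    exact eventually_lt_ncard_levelSet_div
      (finite_levelSet_of_le_mul hC hb_nonneg hbC finite_levelSet_weight) (zero_lt_one.trans hr)
      (eventually_le_mul_of_tendsto_div hbpos hlim hr) d htr
  · obtain ⟨r, hrt, hr⟩ := ((hpow.eventually (gt_mem_nhds ht)).and self_mem_nhdsWithin).exists
    exact eventually_ncard_levelSet_div_lt hb_nonneg hb_le_one hC hbC (zero_lt_one.trans hr)
      (eventually_le_mul_of_tendsto_div weight_pos hlim' hr) d hrt
end
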